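/- arXiv:1609.02858 — 10 statements merged into one kernel-verified Lean document; each statement's English description precedes it below -/
import Mathlib

section
/- Let E be a real inner product space and let L ⊆ E be a lattice of rank two, i.e. a discrete additive subgroup that is free of rank 2 as a ℤ-module. Suppose τ : L → L is an additive bijection satisfying ‖τ(x)‖ = ‖x‖ for all x ∈ L and τ²(x) + τ(x) + x = 0 for all x ∈ L. Then L is a hexagonal lattice: there exists a ℤ-basis b₁, b₂ of L with ‖b₁‖ = ‖b₂‖ = ‖b₁ − b₂‖ (equivalently, L is isometric to M·ℤ[ζ₃] ⊂ ℂ for some real M > 0, where ζ₃ is a primitive cube root of unity). -/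
/-!
Via `τ`, the lattice is a module over the Eisenstein integers `ℤ[ζ₃]`, with `ζ₃` acting as `τ`,
and the claim is that it is free of rank one: `L = ℤ x ⊕ ℤ τx` for some `x`. Then
`‖τx‖ = ‖x‖` and `x + τx = -τ²x`, so the basis `x, -τx` is hexagonal.

Freeness comes from the Euclidean algorithm of `ℤ[ζ₃]`, with `Q(x) = det(x, τx)` (in any
ℤ-basis) in the role of the norm: `Q(px + qτx) = (p² - pq + q²) Q(x)`. Take `x` with `|Q(x)|`
minimal and nonzero. By Cramer's rule `Q(x) y = αx + βτx`; reducing `α, β` modulo `Q(x)` to `α', β'`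
leaves `r = y - (px + qτx)` with `Q(x) Q(r) = α'² - α'β' + β'² ≤ 3 Q(x)² / 4`, so `r = 0`.
-/

open Module

theorem Int.eq_zero_of_sq_sub_mul_add_sq_eq_zero {a b : ℤ} (h : a ^ 2 - a * b + b ^ 2 = 0) :
    a = 0 ∧ b = 0 := by
  constructor <;> nlinarith [sq_nonneg (a - b), sq_nonneg (a + b)]

theorem Int.exists_two_mul_abs_sub_mul_le (a : ℤ) {d : ℤ} (hd : d ≠ 0) :
    ∃ p : ℤ, 2 * |a - p * d| ≤ |d| := by
  refine ⟨round ((a : ℚ) / d), ?_⟩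
  have hd' : (d : ℚ) ≠ 0 := Int.cast_ne_zero.mpr hd
  have key : ((a - round ((a : ℚ) / d) * d : ℤ) : ℚ) = (a / d - round ((a : ℚ) / d)) * d := by
    push_cast; field_simp
  have : 2 * |((a - round ((a : ℚ) / d) * d : ℤ) : ℚ)| ≤ |(d : ℚ)| := by
    rw [key, abs_mul]
    nlinarith [abs_sub_round ((a : ℚ) / d), abs_nonneg (d : ℚ)]
  exact_mod_cast this

namespace Module.Basis

variable {R N : Type*} [CommRing R] [AddCommGroup N] [Module R N] (b : Basis (Fin 2) R N)

theorem det_fin_two_apply (u v : N) :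
    b.det ![u, v] = b.repr u 0 * b.repr v 1 - b.repr v 0 * b.repr u 1 := by
  simp [det_apply, Matrix.det_fin_two, toMatrix_apply]

theorem det_smul_eq_det_smul_add_det_smul (u v w : N) :
    b.det ![u, v] • w = b.det ![w, v] • u + b.det ![u, w] • v := by
  refine b.ext_elem fun i => ?_
  simp only [det_fin_two_apply, map_add, map_smul, Finsupp.add_apply, Finsupp.smul_apply,
    smul_eq_mul]
  fin_cases i <;> simp <;> ring

end Module.Basis

section

variable {M : Type*} [AddCommGroup M] {τ : M →+ M}

theorem map_zsmul_add_zsmul_self (hτ : ∀ x, τ (τ x) + τ x + x = 0) (p q : ℤ) (x : M) :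
    τ (p • x + q • τ x) = (-q) • x + (p - q) • τ x := by
  rw [map_add, map_zsmul, map_zsmul]
  linear_combination (norm := module) q • hτ x

theorem linearIndependent_pair_self_apply [IsTorsionFree ℤ M] (hτ : ∀ x, τ (τ x) + τ x + x = 0)
    {x : M} (hx : x ≠ 0) : LinearIndependent ℤ ![x, τ x] := by
  refine LinearIndependent.pair_iff.mpr fun p q h => Int.eq_zero_of_sq_sub_mul_add_sq_eq_zero ?_
  have : (p ^ 2 - p * q + q ^ 2) • x = (p - q) • (p • x + q • τ x) - q • τ (p • x + q • τ x) := by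
    rw [map_zsmul_add_zsmul_self hτ]
    module
  rw [h, map_zero, smul_zero, smul_zero, sub_zero] at this
  simpa [hx] using this

namespace Module.Basis

variable (b : Basis (Fin 2) ℤ M)

theorem det_map_zsmul_add_zsmul_self (hτ : ∀ x, τ (τ x) + τ x + x = 0) (p q : ℤ) (x : M) :
    b.det ![p • x + q • τ x, τ (p • x + q • τ x)] = (p ^ 2 - p * q + q ^ 2) * b.det ![x, τ x] := by
  rw [map_zsmul_add_zsmul_self hτ]
  simp only [det_fin_two_apply, map_add, map_zsmul, Finsupp.add_apply, Finsupp.smul_apply,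
    smul_eq_mul]
  ring

theorem det_zsmul_map_zsmul (d : ℤ) (x : M) :
    b.det ![d • x, τ (d • x)] = d ^ 2 * b.det ![x, τ x] := by
  simp only [det_fin_two_apply, map_zsmul, Finsupp.smul_apply, smul_eq_mul]
  ring

theorem exists_det_map_ne_zero (hτ : ∀ x, τ (τ x) + τ x + x = 0) : ∃ x, b.det ![x, τ x] ≠ 0 := by
  have := b.isTorsionFree
  refine ⟨b 0, fun h => ?_⟩
  have hcramer := b.det_smul_eq_det_smul_add_det_smul (b 0) (τ (b 0)) (b 1)
  rw [h, zero_smul, eq_comm] at hcramer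
  have h01 : b.det ![b 0, b 1] = 0 :=
    (LinearIndependent.pair_iff.mp (linearIndependent_pair_self_apply hτ (b.ne_zero 0)) _ _
      hcramer).2
  simp [det_fin_two_apply] at h01

theorem exists_zsmul_add_zsmul_eq_of_minimal (hτ : ∀ x, τ (τ x) + τ x + x = 0) {x : M}
    (hx : b.det ![x, τ x] ≠ 0)
    (hmin : ∀ z, b.det ![z, τ z] ≠ 0 → (b.det ![x, τ x]).natAbs ≤ (b.det ![z, τ z]).natAbs) (y : M) :
    ∃ p q : ℤ, p • x + q • τ x = y := by
  have := b.isTorsionFree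
  set D := b.det ![x, τ x] with hD
  obtain ⟨p, hp⟩ := Int.exists_two_mul_abs_sub_mul_le (b.det ![y, τ x]) hx
  obtain ⟨q, hq⟩ := Int.exists_two_mul_abs_sub_mul_le (b.det ![x, y]) hx
  set α := b.det ![y, τ x] - p * D
  set β := b.det ![x, y] - q * D
  set r := y - (p • x + q • τ x)
  have hr : D • r = α • x + β • τ x := by
    rw [smul_sub, b.det_smul_eq_det_smul_add_det_smul x (τ x) y]
    module
  have hDr : D * b.det ![r, τ r] = α ^ 2 - α * β + β ^ 2 := by
    have h := b.det_zsmul_map_zsmul (τ := τ) D r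
    rw [hr, b.det_map_zsmul_add_zsmul_self hτ, ← hD] at h
    exact mul_left_cancel₀ hx (by linear_combination -h)
  have hsmall : 4 * (α ^ 2 - α * β + β ^ 2) ≤ 3 * D ^ 2 := by
    nlinarith [abs_mul_abs_self α, abs_mul_abs_self β, abs_mul_abs_self D, abs_nonneg α,
      abs_nonneg β, abs_mul α β, neg_abs_le (α * β)]
  have hr0 : b.det ![r, τ r] = 0 := by
    by_contra hne
    have hN : 0 ≤ α ^ 2 - α * β + β ^ 2 := by nlinarith [sq_nonneg (α - β), sq_nonneg α, sq_nonneg β]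
    have hle : |D| ≤ |b.det ![r, τ r]| := by
      rw [Int.abs_eq_natAbs, Int.abs_eq_natAbs]
      exact_mod_cast hmin r hne
    have h1 := mul_le_mul_of_nonneg_left hle (abs_nonneg D)
    rw [abs_mul_abs_self, ← abs_mul, hDr, abs_of_nonneg hN] at h1
    nlinarith [sq_pos_of_ne_zero hx]
  obtain ⟨hα, hβ⟩ := Int.eq_zero_of_sq_sub_mul_add_sq_eq_zero (by rw [← hDr, hr0, mul_zero])
  rw [hα, hβ, zero_smul, zero_smul, add_zero, smul_eq_zero] at hr
  exact ⟨p, q, (sub_eq_zero.mp (hr.resolve_left hx)).symm⟩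

end Module.Basis

theorem Module.Basis.exists_basis_apply_one_eq (b : Basis (Fin 2) ℤ M) (hτ : ∀ x, τ (τ x) + τ x + x = 0) :
    ∃ c : Basis (Fin 2) ℤ M, c 1 = τ (c 0) := by
  have := b.isTorsionFree
  set S := {x | b.det ![x, τ x] ≠ 0}
  have hS : S.Nonempty := b.exists_det_map_ne_zero hτ
  set x := Function.argminOn (fun z => (b.det ![z, τ z]).natAbs) S hS
  have hx : x ∈ S := Function.argminOn_mem _ _ _
  have hx0 : x ≠ 0 := by rintro h; simp [h, S, det_fin_two_apply] at hx
  have hspan : ⊤ ≤ Submodule.span ℤ (Set.range ![x, τ x]) := fun y _ => by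
    obtain ⟨p, q, h⟩ := b.exists_zsmul_add_zsmul_eq_of_minimal hτ hx
      (fun z hz => Function.argminOn_le (fun z => (b.det ![z, τ z]).natAbs) S hz) y
    exact (Submodule.mem_span_range_iff_exists_fun ℤ).mpr ⟨![p, q], by simpa using h⟩
  exact ⟨.mk (linearIndependent_pair_self_apply hτ hx0) hspan, by simp⟩

end

theorem hexagonal_of_isometry_order_three_general
    {E : Type*} [NormedAddCommGroup E]
    (L : AddSubgroup E)
    (b : Module.Basis (Fin 2) ℤ L)
    (τ : L ≃+ L)
    (hiso : ∀ x : L, ‖((τ x : L) : E)‖ = ‖(x : E)‖)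
    (hpoly : ∀ x : L, τ (τ x) + τ x + x = 0) :
    ∃ c : Module.Basis (Fin 2) ℤ L,
      ‖((c 0 : L) : E)‖ = ‖((c 1 : L) : E)‖ ∧
      ‖((c 0 : L) : E)‖ = ‖((c 0 : L) : E) - ((c 1 : L) : E)‖ := by
  obtain ⟨c, hc⟩ := b.exists_basis_apply_one_eq (τ := τ.toAddMonoidHom) hpoly
  have hsum : c 0 + τ (c 0) = -τ (τ (c 0)) := by
    rw [eq_neg_iff_add_eq_zero, ← hpoly (c 0)]
    abel
  refine ⟨c.unitsSMul ![1, -1], ?_, ?_⟩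
  · simp [Basis.unitsSMul_apply, hc, hiso]
  · simp only [Basis.unitsSMul_apply, Matrix.cons_val_zero, Matrix.cons_val_one,
      Matrix.cons_val_fin_one, one_smul, Units.neg_smul, hc, AddEquiv.toAddMonoidHom_eq_coe,
      AddMonoidHom.coe_coe, NegMemClass.coe_neg, sub_neg_eq_add]
    rw [← AddSubgroup.coe_add, hsum, AddSubgroup.coe_neg, norm_neg, hiso, hiso]

/-- A rank-two lattice `L` in a real inner product space admitting an isometry `τ` with
`τ² + τ + 1 = 0` is hexagonal: it has a ℤ-basis `b₁, b₂` with `‖b₁‖ = ‖b₂‖ = ‖b₁ − b₂‖`. -/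
theorem hexagonal_of_isometry_order_three
    {E : Type*} [NormedAddCommGroup E] [InnerProductSpace ℝ E]
    (L : AddSubgroup E) (hdisc : DiscreteTopology L)
    (b : Module.Basis (Fin 2) ℤ L)
    (τ : L ≃+ L)
    (hiso : ∀ x : L, ‖((τ x : L) : E)‖ = ‖(x : E)‖)
    (hpoly : ∀ x : L, τ (τ x) + τ x + x = 0) :
    ∃ c : Module.Basis (Fin 2) ℤ L,
      ‖((c 0 : L) : E)‖ = ‖((c 1 : L) : E)‖ ∧
      ‖((c 0 : L) : E)‖ = ‖((c 0 : L) : E) - ((c 1 : L) : E)‖ :=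
  hexagonal_of_isometry_order_three_general L b τ hiso hpoly
end

section
/- Let F be a cyclic cubic field with Galois group generated by σ and ring of integers O_F. Then there exists f ∈ O_F with Tr_{F/ℚ}(f) = f + σ(f) + σ²(f) = 0 such that, writing M for the additive subgroup of O_F generated by 1, f and σ(f) (i.e. M = ℤ ⊕ ℤ[σ]·f), either (i) O_F = M, or (ii) M ⊊ O_F and the index [O_F : M] equals 3. -/
open NumberField
open scoped nonZeroDivisors

/-- `‖uf‖² = u₀²f₀² + u₁²f₁² + u₂²f₂²` where `fᵢ = ι(σ^i f)`. -/
noncomputable def unorm2 {F : Type*} [Field F] [Algebra ℚ F] (σ : F ≃ₐ[ℚ] F) (ι : F →+* ℝ)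
    (u : Fin 3 → ℝ) (f : F) : ℝ :=
  (u 0) ^ 2 * (ι f) ^ 2 + (u 1) ^ 2 * (ι (σ f)) ^ 2 + (u 2) ^ 2 * (ι (σ (σ f))) ^ 2

/-- `‖f‖² = f₀² + f₁² + f₂²` where `fᵢ = ι(σ^i f)`. -/
noncomputable def fnorm2 {F : Type*} [Field F] [Algebra ℚ F] (σ : F ≃ₐ[ℚ] F) (ι : F →+* ℝ)
    (f : F) : ℝ :=
  (ι f) ^ 2 + (ι (σ f)) ^ 2 + (ι (σ (σ f))) ^ 2

/-- `k⁰(S, u) = ∑_{f ∈ S} exp(−π‖uf‖²)`. -/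
noncomputable def k0 {F : Type*} [Field F] [Algebra ℚ F] (σ : F ≃ₐ[ℚ] F) (ι : F →+* ℝ)
    (S : Set F) (u : Fin 3 → ℝ) : ℝ :=
  ∑' g : S, Real.exp (-Real.pi * unorm2 σ ι u (g : F))

/-!
The trace-zero sublattice `T` of `𝓞 F` has rank `2`, and on it `σ² + σ + 1 = 0` because the trace
is `1 + σ + σ²`. So `T` is a rank-one module over the Eisenstein integers, a PID, and hence
`T = ℤ f ⊕ ℤ σ(f)`; concretely, a generator comes from Gauss reduction of a binary quadratic form
of discriminant `-3`. Then `ℤ + T` is the kernel of the trace modulo `3` on `𝓞 F`, whose image in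
`ℤ/3` has order `1` or `3`.
-/

open Module Matrix

/-- Gauss reduction: after moving `B` into `[-C, C)`, either the form is reduced, which for
discriminant `-3` forces `C = 1`, or swapping the outer coefficients decreases `C`. -/
theorem Int.exists_eq_one_of_discrim_eq_neg_three (C B A : ℤ) (hC : 0 < C)
    (hdisc : discrim C B A = -3) : ∃ x y : ℤ, C * x ^ 2 + B * x * y + A * y ^ 2 = 1 := by
  rw [discrim] at hdisc
  obtain ⟨q, B', hB', hB'C, rfl⟩ : ∃ q B' : ℤ, -C ≤ B' ∧ B' < C ∧ B = B' + 2 * C * q := by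
    have hr := Int.emod_nonneg (B + C) (by omega : 2 * C ≠ 0)
    have hr' := Int.emod_lt_of_pos (B + C) (by omega : 0 < 2 * C)
    have hqr := Int.mul_ediv_add_emod (B + C) (2 * C)
    exact ⟨(B + C) / (2 * C), (B + C) % (2 * C) - C, by omega, by omega, by linarith⟩
  set A' := A - B' * q - C * q ^ 2
  have hdisc' : B' ^ 2 - 4 * A' * C = -3 := by linear_combination hdisc
  have hA' : 0 < A' := by nlinarith
  by_cases hlt : A' < C
  · obtain ⟨x, y, hxy⟩ := exists_eq_one_of_discrim_eq_neg_three A' B' C hA'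
      (by rw [discrim]; linear_combination hdisc')
    exact ⟨y - q * x, x, by linear_combination hxy⟩
  · obtain rfl : C = 1 := by nlinarith
    exact ⟨1, 0, by ring⟩
termination_by C.toNat
decreasing_by omega

/-- `det (x, J x)` is the binary quadratic form `c x₀² + (d - a) x₀ x₁ - b x₁²` in the entries
`!![a, b; c, d]` of `J`, of discriminant `(a + d)² - 4 det J = -3`. -/
theorem Matrix.exists_isUnit_det_of_mul_self_add_self_add_one_eq_zero
    (J : Matrix (Fin 2) (Fin 2) ℤ) (hJ : J * J + J + 1 = 0) :
    ∃ x : Fin 2 → ℤ, IsUnit (Matrix.of ![x, J *ᵥ x]).det := by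
  have entry (i k : Fin 2) := congrFun₂ hJ i k
  simp only [add_apply, mul_apply, Fin.sum_univ_two, one_apply, zero_apply] at entry
  have e00 : J 0 0 * J 0 0 + J 0 1 * J 1 0 + J 0 0 + 1 = 0 := by simpa using entry 0 0
  have e01 : J 0 0 * J 0 1 + J 0 1 * J 1 1 + J 0 1 = 0 := by simpa using entry 0 1
  have e10 : J 1 0 * J 0 0 + J 1 1 * J 1 0 + J 1 0 = 0 := by simpa using entry 1 0
  have htrace : J 0 0 + J 1 1 + 1 = 0 := by
    by_contra h
    have hb : J 0 1 = 0 := (mul_eq_zero.mp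
      (by linear_combination e01 : J 0 1 * (J 0 0 + J 1 1 + 1) = 0)).resolve_right h
    have hc : J 1 0 = 0 := (mul_eq_zero.mp
      (by linear_combination e10 : J 1 0 * (J 0 0 + J 1 1 + 1) = 0)).resolve_right h
    rw [hb, hc] at e00
    nlinarith [sq_nonneg (2 * J 0 0 + 1)]
  have hdisc : discrim (J 1 0) (J 1 1 - J 0 0) (-J 0 1) = -3 := by
    rw [discrim]
    linear_combination 4 * e00 + (J 1 1 - 3 * J 0 0 - 1) * htrace
  have hc : J 1 0 ≠ 0 := by
    intro hc
    rw [hc, discrim] at hdisc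
    nlinarith [sq_nonneg (J 1 1 - J 0 0)]
  have hdet (x y : ℤ) : (Matrix.of ![![x, y], J *ᵥ ![x, y]]).det =
      J 1 0 * x ^ 2 + (J 1 1 - J 0 0) * x * y + -J 0 1 * y ^ 2 := by
    simp only [det_fin_two, of_apply, cons_val_zero, cons_val_one, mulVec_fin_two]
    ring
  rcases hc.lt_or_gt with hneg | hpos
  · obtain ⟨x, y, hxy⟩ := Int.exists_eq_one_of_discrim_eq_neg_three (-J 1 0) (-(J 1 1 - J 0 0))
      (J 0 1) (by omega) (by rw [discrim] at hdisc ⊢; linear_combination hdisc)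
    exact ⟨![x, y], Int.isUnit_iff.mpr (Or.inr (by rw [hdet]; linear_combination -hxy))⟩
  · obtain ⟨x, y, hxy⟩ := Int.exists_eq_one_of_discrim_eq_neg_three _ _ _ hpos hdisc
    exact ⟨![x, y], Int.isUnit_iff.mpr (Or.inl (by rw [hdet, hxy]))⟩

theorem Module.Basis.exists_span_pair_eq_top_of_mul_self_add_self_add_one_eq_zero
    {L : Type*} [AddCommGroup L] (e : Basis (Fin 2) ℤ L) (j : Module.End ℤ L)
    (hj : j * j + j + 1 = 0) : ∃ v : L, Submodule.span ℤ {v, j v} = ⊤ := by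
  set J := LinearMap.toMatrix e e j
  have hJ : J * J + J + 1 = 0 := by
    have := congrArg (LinearMap.toMatrix e e) hj
    rwa [map_add, map_add, LinearMap.toMatrix_mul, LinearMap.toMatrix_one, map_zero] at this
  obtain ⟨x, hx⟩ := exists_isUnit_det_of_mul_self_add_self_add_one_eq_zero J hJ
  set v := e.equivFun.symm x
  have hv : ⇑(e.repr v) = x := e.equivFun.apply_symm_apply x
  have hjv : ⇑(e.repr (j v)) = J *ᵥ x := by rw [← hv, LinearMap.toMatrix_mulVec_repr]
  have hcols : e.toMatrix ![v, j v] = (Matrix.of ![x, J *ᵥ x])ᵀ := by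
    ext i k
    fin_cases k
    · simp [Basis.toMatrix_apply, hv]
    · simp [Basis.toMatrix_apply, hjv]
  have hbasis := e.is_basis_iff_det.mpr (by rwa [e.det_apply, hcols, det_transpose])
  exact ⟨v, by rw [← range_cons_cons_empty _ _ ![], hbasis.2]⟩

theorem IsGalois.algebraMap_trace_eq_sum_range_pow {K L : Type*} [Field K] [Field L]
    [Algebra K L] [FiniteDimensional K L] [IsGalois K L] {σ : Gal(L/K)}
    (hσ : ∀ τ, τ ∈ Subgroup.zpowers σ) (x : L) :
    algebraMap K L (Algebra.trace K L x) = ∑ i ∈ Finset.range (finrank K L), (σ ^ i) x := by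
  rw [trace_eq_sum_automorphisms, ← IsGalois.card_aut_eq_finrank,
    ← orderOf_eq_card_of_forall_mem_zpowers hσ, ← Fin.sum_univ_eq_sum_range (fun i => (σ ^ i) x)]
  exact (Fintype.sum_equiv ((finEquivZPowers (isOfFinOrder_of_finite σ)).trans
    (Equiv.subtypeUnivEquiv hσ)) _ _ fun i => by simp [finEquivZPowers_apply]).symm

theorem NumberField.coe_trace_int_eq_of_cyclic_cubic {K : Type*} [Field K] [NumberField K]
    [IsGalois ℚ K] (h3 : finrank ℚ K = 3) {σ : Gal(K/ℚ)} (hσ : ∀ τ, τ ∈ Subgroup.zpowers σ)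
    (x : 𝓞 K) : ((Algebra.trace ℤ (𝓞 K) x : ℤ) : K) = x + σ x + σ (σ x) := by
  rw [← map_intCast (algebraMap ℚ K), Algebra.coe_trace_int,
    IsGalois.algebraMap_trace_eq_sum_range_pow hσ, h3]
  simp [Finset.sum_range_succ]

theorem NumberField.trace_int_one (K : Type*) [Field K] [NumberField K] :
    Algebra.trace ℤ (𝓞 K) 1 = finrank ℚ K := by
  rw [← map_one (algebraMap ℤ (𝓞 K)), Algebra.trace_algebraMap, RingOfIntegers.rank, nsmul_one]

theorem NumberField.finrank_ker_trace_int_add_one (K : Type*) [Field K] [NumberField K] :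
    finrank ℤ (LinearMap.ker (Algebra.trace ℤ (𝓞 K))) + 1 = finrank ℚ K := by
  have hrange : finrank ℤ (LinearMap.range (Algebra.trace ℤ (𝓞 K))) = 1 := by
    refine le_antisymm ((Submodule.finrank_le _).trans (finrank_self ℤ).le)
      (Nat.one_le_iff_ne_zero.mpr ?_)
    rw [Ne, Submodule.finrank_eq_zero, ← Ne, Submodule.ne_bot_iff]
    exact ⟨_, ⟨1, rfl⟩, by simp [trace_int_one, finrank_pos.ne']⟩
  rw [← RingOfIntegers.rank,
    ← Submodule.finrank_quotient_add_finrank (LinearMap.ker (Algebra.trace ℤ (𝓞 K))),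
    (LinearMap.quotKerEquivRange _).finrank_eq, hrange, add_comm]

theorem NumberField.trace_int_mapRingHom {K : Type*} [Field K] [NumberField K] {σ : K →+* K}
    (htr : ∀ x : 𝓞 K, ((Algebra.trace ℤ (𝓞 K) x : ℤ) : K) = x + σ x + σ (σ x)) (x : 𝓞 K) :
    Algebra.trace ℤ (𝓞 K) (RingOfIntegers.mapRingHom σ x) = Algebra.trace ℤ (𝓞 K) x := by
  apply Int.cast_injective (α := K)
  calc _ = σ (x + σ x + σ (σ x)) := by rw [htr, map_add, map_add]; rfl
    _ = _ := by rw [← htr, map_intCast]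

theorem NumberField.exists_span_pair_eq_ker_trace_int {K : Type*} [Field K] [NumberField K]
    (h3 : finrank ℚ K = 3) {σ : K →+* K}
    (htr : ∀ x : 𝓞 K, ((Algebra.trace ℤ (𝓞 K) x : ℤ) : K) = x + σ x + σ (σ x)) :
    ∃ v ∈ LinearMap.ker (Algebra.trace ℤ (𝓞 K)),
      Submodule.span ℤ {v, RingOfIntegers.mapRingHom σ v} =
        LinearMap.ker (Algebra.trace ℤ (𝓞 K)) := by
  set T := LinearMap.ker (Algebra.trace ℤ (𝓞 K))
  let s : Module.End ℤ (𝓞 K) := (RingOfIntegers.mapRingHom σ).toIntAlgHom.toLinearMap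
  let j : Module.End ℤ T := s.restrict fun x hx => by
    rw [LinearMap.mem_ker] at hx ⊢
    exact (trace_int_mapRingHom htr x).trans hx
  have hj : j * j + j + 1 = 0 := by
    ext ⟨x, hx⟩
    have hsum := htr x
    rw [LinearMap.mem_ker.mp hx, Int.cast_zero] at hsum
    simp only [LinearMap.add_apply, End.mul_apply, End.one_apply, LinearMap.zero_apply,
      Submodule.coe_add, ZeroMemClass.coe_zero, LinearMap.coe_restrict_apply, map_add, map_zero,
      AlgHom.toLinearMap_apply, RingHom.toIntAlgHom_coe, RingOfIntegers.mapRingHom_apply, j, s]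
    linear_combination -hsum
  have hT : finrank ℤ T = 2 := Nat.add_right_cancel ((finrank_ker_trace_int_add_one K).trans h3)
  obtain ⟨v, hv⟩ := Basis.exists_span_pair_eq_top_of_mul_self_add_self_add_one_eq_zero
    (finBasisOfFinrankEq ℤ T hT) j hj
  refine ⟨v, v.2, ?_⟩
  have := congrArg (Submodule.map T.subtype) hv
  rwa [Submodule.map_span, Submodule.map_top, Submodule.range_subtype, Set.image_pair] at this

theorem NumberField.closure_insert_one_eq_ker_trace_int_mod {K : Type*} [Field K] [NumberField K]
    {s : Set (𝓞 K)} (hs : Submodule.span ℤ s = LinearMap.ker (Algebra.trace ℤ (𝓞 K))) :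
    AddSubgroup.closure (insert 1 s) =
      ((Int.castAddHom (ZMod (finrank ℚ K))).comp (Algebra.trace ℤ (𝓞 K)).toAddMonoidHom).ker := by
  refine le_antisymm ((AddSubgroup.closure_le _).mpr ?_) fun x hx => ?_
  · rintro x (rfl | hx)
    · simp [trace_int_one]
    · have hker : x ∈ LinearMap.ker (Algebra.trace ℤ (𝓞 K)) := hs ▸ Submodule.subset_span hx
      simp [LinearMap.mem_ker.mp hker]
  · obtain ⟨k, hk⟩ := (ZMod.intCast_zmod_eq_zero_iff_dvd _ _).mp hx
    have hsub : x - k • 1 ∈ Submodule.span ℤ s := by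
      rw [hs, LinearMap.mem_ker, map_sub, map_zsmul, trace_int_one,
        ← LinearMap.toAddMonoidHom_coe, hk, smul_eq_mul, mul_comm, sub_self]
    rw [← sub_add_cancel x (k • 1)]
    refine add_mem ?_ (zsmul_mem (AddSubgroup.subset_closure (Set.mem_insert _ _)) k)
    rw [← Submodule.span_int_eq_addSubgroupClosure] at *
    exact Submodule.span_mono (Set.subset_insert _ _) hsub

theorem AddMonoidHom.index_ker_eq_one_or_eq_of_prime {G : Type*} [AddGroup G] {p : ℕ}
    (hp : p.Prime) (φ : G →+ ZMod p) : φ.ker.index = 1 ∨ φ.ker.index = p := by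
  have : NeZero p := ⟨hp.ne_zero⟩
  rw [AddSubgroup.index_ker]
  refine hp.eq_one_or_self_of_dvd _ ?_
  simpa using AddSubgroup.card_addSubgroup_dvd_card φ.range

/-- Structure of the ring of integers of a cyclic cubic field: there is a trace-zero
integer `f` such that `M = ℤ ⊕ ℤ[σ]·f` (the additive subgroup generated by `1, f, σ(f)`)
is either all of `O_F`, or has index `3` in `O_F`. -/
theorem ring_of_integers_structure
    {F : Type*} [Field F] [NumberField F] [IsGalois ℚ F]
    (h3 : Module.finrank ℚ F = 3)
    (σ : F ≃ₐ[ℚ] F) (hσ : ∀ τ : F ≃ₐ[ℚ] F, τ ∈ Subgroup.zpowers σ) :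
    ∃ f : F, f ∈ (algebraMap (𝓞 F) F).range ∧ f + σ f + σ (σ f) = 0 ∧
      (AddSubgroup.closure {1, f, σ f} = ((algebraMap (𝓞 F) F).range).toAddSubgroup ∨
        (AddSubgroup.closure {1, f, σ f} < ((algebraMap (𝓞 F) F).range).toAddSubgroup ∧
          (AddSubgroup.closure {1, f, σ f}).relIndex
            ((algebraMap (𝓞 F) F).range).toAddSubgroup = 3)) := by
  have htr := coe_trace_int_eq_of_cyclic_cubic h3 hσ
  obtain ⟨v, hv, hspan⟩ := exists_span_pair_eq_ker_trace_int h3 (σ := (σ : F →+* F)) htr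
  set φ := (Int.castAddHom (ZMod (finrank ℚ F))).comp (Algebra.trace ℤ (𝓞 F)).toAddMonoidHom
  set ι := (algebraMap (𝓞 F) F).toAddMonoidHom
  have hι : Function.Injective ι := RingOfIntegers.coe_injective
  have hM : AddSubgroup.closure {1, (v : F), σ v} = φ.ker.map ι := by
    rw [← closure_insert_one_eq_ker_trace_int_mod hspan, AddMonoidHom.map_closure]
    simp [Set.image_insert_eq, ι]
  have hO : ((algebraMap (𝓞 F) F).range).toAddSubgroup = (⊤ : AddSubgroup (𝓞 F)).map ι := by
    ext
    simp [ι]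
  refine ⟨v, ⟨v, rfl⟩, by rw [← htr, hv, Int.cast_zero], ?_⟩
  rw [hM, hO]
  rcases φ.index_ker_eq_one_or_eq_of_prime (h3 ▸ Nat.prime_three) with hone | hthree
  · exact Or.inl (by rw [AddSubgroup.index_eq_one.mp hone])
  · refine Or.inr ⟨(AddSubgroup.map_lt_map_iff_of_injective hι).mpr (lt_top_iff_ne_top.mpr ?_), ?_⟩
    · intro htop
      rw [htop, AddSubgroup.index_top, h3] at hthree
      omega
    · rw [AddSubgroup.relIndex_map_map_of_injective _ _ hι, AddSubgroup.relIndex_top_right,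
        hthree, h3]
end

section
/- Let F be a cyclic cubic field and let p be the positive integer with p² = |disc(F)| (p is the conductor of F). Then every g ∈ O_F with g ∉ ℤ satisfies ‖g‖² ≥ 2p/3, where ‖g‖² = ∑_{i=0}^{2} ι(σ^i(g))². -/
open NumberField
open scoped nonZeroDivisors

/-! If `g ∉ ℤ`, the elements `1, g, σ g` span a full sublattice of `𝓞 F`, so their discriminant
is a nonzero square multiple of `disc F` and has absolute value at least `p²`. Computed through the
embeddings, that discriminant is `det (σʲ bᵢ)² = (S / 2)²` with `S = ∑ᵢ (gᵢ - gᵢ₊₁)²` (this is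
`spread σ ι g`), hence `S ≥ 2p`; and `S = 3‖g‖² - (Tr g)² ≤ 3‖g‖²`. -/

open Finset Module Matrix

theorem Finset.sum_univ_eq_sum_range_orderOf {G M : Type*} [Group G] [Fintype G] [DecidableEq G]
    [AddCommMonoid M] {a : G} (ha : ∀ x : G, x ∈ Subgroup.zpowers a) (f : G → M) :
    ∑ x, f x = ∑ i ∈ range (orderOf a), f (a ^ i) := by
  rw [← IsCyclic.image_range_orderOf ha, sum_image]
  exact fun i hi j hj ↦ pow_injOn_Iio_orderOf (mem_range.mp hi) (mem_range.mp hj)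

theorem Algebra.trace_eq_sum_range_pow_apply {K L : Type*} [Field K] [Field L] [Algebra K L]
    [FiniteDimensional K L] [IsGalois K L] {σ : L ≃ₐ[K] L}
    (hσ : ∀ τ : L ≃ₐ[K] L, τ ∈ Subgroup.zpowers σ) (x : L) :
    algebraMap K L (Algebra.trace K L x) = ∑ i ∈ range (finrank K L), (σ ^ i) x := by
  classical
  rw [trace_eq_sum_automorphisms, sum_univ_eq_sum_range_orderOf hσ,
    orderOf_eq_card_of_forall_mem_zpowers hσ, IsGalois.card_aut_eq_finrank]

theorem NumberField.RingOfIntegers.exists_intCast_of_coe_eq_algebraMap {K : Type*} [Field K]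
    [NumberField K] {x : 𝓞 K} {q : ℚ} (hx : (x : K) = algebraMap ℚ K q) :
    ∃ n : ℤ, (x : K) = n := by
  have hq : IsIntegral ℤ q :=
    (isIntegral_algebraMap_iff (algebraMap ℚ K).injective).mp (hx ▸ x.isIntegral_coe)
  obtain ⟨n, rfl⟩ := IsIntegrallyClosed.isIntegral_iff.mp hq
  exact ⟨n, by simp [hx]⟩

theorem NumberField.abs_discr_le_abs_discr {K : Type*} [Field K] [NumberField K] {ι : Type*}
    [Fintype ι] [DecidableEq ι] (b : ι → 𝓞 K) (hcard : Fintype.card ι = finrank ℚ K)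
    (hb : Algebra.discr ℤ b ≠ 0) : |discr K| ≤ |Algebra.discr ℤ b| := by
  have e : ι ≃ Free.ChooseBasisIndex ℤ (𝓞 K) := Fintype.equivOfCardEq <| by
    rw [hcard, ← finrank_eq_card_chooseBasisIndex, RingOfIntegers.rank]
  set B := (RingOfIntegers.basis K).reindex e.symm
  set P : Matrix ι ι ℤ := Matrix.of fun i j ↦ B.repr (b i) j
  have hb_eq : (P.map (algebraMap ℤ (𝓞 K))) *ᵥ B = b := by
    funext i
    simpa [Matrix.mulVec, dotProduct, P, Algebra.smul_def, mul_comm] using B.sum_repr (b i)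
  have hdiscr : Algebra.discr ℤ b = P.det ^ 2 * discr K := by
    rw [← hb_eq, Algebra.discr_of_matrix_mulVec, discr_eq_discr]
  have hP : P.det ≠ 0 := by
    intro h
    exact hb (by rw [hdiscr, h]; ring)
  rw [hdiscr, abs_mul, abs_pow]
  exact le_mul_of_one_le_left (abs_nonneg _) (one_le_pow₀ (Int.one_le_abs hP))

noncomputable def spread {F : Type*} [Field F] [Algebra ℚ F] (σ : F ≃ₐ[ℚ] F) (ι : F →+* ℝ)
    (f : F) : ℝ :=
  (ι f - ι (σ f)) ^ 2 + (ι (σ f) - ι (σ (σ f))) ^ 2 + (ι (σ (σ f)) - ι f) ^ 2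

theorem spread_le_three_mul_fnorm2 {F : Type*} [Field F] [Algebra ℚ F] (σ : F ≃ₐ[ℚ] F)
    (ι : F →+* ℝ) (f : F) : spread σ ι f ≤ 3 * fnorm2 σ ι f := by
  unfold spread fnorm2
  nlinarith [sq_nonneg (ι f + ι (σ f) + ι (σ (σ f)))]

namespace CyclicCubic

variable {F : Type*} [Field F] [NumberField F] [IsGalois ℚ F] {σ : F ≃ₐ[ℚ] F}

theorem apply_apply_apply (h3 : finrank ℚ F = 3) (hσ : ∀ τ : F ≃ₐ[ℚ] F, τ ∈ Subgroup.zpowers σ)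
    (x : F) : σ (σ (σ x)) = x := by
  have hσ3 : σ ^ 3 = 1 := by
    rw [← h3, ← IsGalois.card_aut_eq_finrank, ← orderOf_eq_card_of_forall_mem_zpowers hσ]
    exact pow_orderOf_eq_one σ
  simpa [pow_succ] using DFunLike.congr_fun hσ3 x

theorem trace_eq (h3 : finrank ℚ F = 3) (hσ : ∀ τ : F ≃ₐ[ℚ] F, τ ∈ Subgroup.zpowers σ)
    (ι : F →+* ℝ) (x : F) : (Algebra.trace ℚ F x : ℝ) = ι x + ι (σ x) + ι (σ (σ x)) := by
  have h := congrArg ι (Algebra.trace_eq_sum_range_pow_apply hσ x)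
  rw [h3, sum_range_succ, sum_range_succ, sum_range_one] at h
  simpa [pow_succ] using h

theorem trace_int_eq (h3 : finrank ℚ F = 3) (hσ : ∀ τ : F ≃ₐ[ℚ] F, τ ∈ Subgroup.zpowers σ)
    (ι : F →+* ℝ) (x : 𝓞 F) :
    (Algebra.trace ℤ (𝓞 F) x : ℝ) = ι x + ι (σ x) + ι (σ (σ x)) := by
  rw [← trace_eq h3 hσ ι, ← Algebra.coe_trace_int, Rat.cast_intCast]

theorem discr_eq_sq_spread_div_two (h3 : finrank ℚ F = 3)
    (hσ : ∀ τ : F ≃ₐ[ℚ] F, τ ∈ Subgroup.zpowers σ) (ι : F →+* ℝ) (g : 𝓞 F) :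
    (Algebra.discr ℤ ![1, g, RingOfIntegers.mapRingEquiv (σ : F ≃+* F) g] : ℝ) =
      (spread σ ι g / 2) ^ 2 := by
  rw [Algebra.discr_def, Matrix.det_fin_three]
  simp only [Fin.isValue, Algebra.traceMatrix_apply, Algebra.traceForm_apply, cons_val_zero,
    cons_val_one, Matrix.cons_val, mul_one, one_mul, Int.cast_sub, Int.cast_add, Int.cast_mul,
    trace_int_eq h3 hσ ι, map_one, map_mul, RingOfIntegers.mapRingEquiv_apply, RingEquiv.coe_mk,
    AlgEquiv.toEquiv_eq_coe, EquivLike.coe_coe, apply_apply_apply h3 hσ, spread]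
  ring

theorem spread_ne_zero (h3 : finrank ℚ F = 3) (hσ : ∀ τ : F ≃ₐ[ℚ] F, τ ∈ Subgroup.zpowers σ)
    (ι : F →+* ℝ) {g : 𝓞 F} (hg : ¬∃ n : ℤ, (g : F) = n) : spread σ ι g ≠ 0 := by
  intro h0
  unfold spread at h0
  have h01 : (ι g - ι (σ g)) ^ 2 = 0 := by
    linarith [sq_nonneg (ι g - ι (σ g)), sq_nonneg (ι (σ g) - ι (σ (σ g))),
      sq_nonneg (ι (σ (σ g)) - ι g)]
  have h12 : (ι (σ g) - ι (σ (σ g))) ^ 2 = 0 := by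
    linarith [sq_nonneg (ι g - ι (σ g)), sq_nonneg (ι (σ g) - ι (σ (σ g))),
      sq_nonneg (ι (σ (σ g)) - ι g)]
  rw [sq_eq_zero_iff, sub_eq_zero] at h01 h12
  refine hg (RingOfIntegers.exists_intCast_of_coe_eq_algebraMap
    (q := Algebra.trace ℚ F g / 3) (ι.injective ?_))
  rw [eq_ratCast, map_ratCast, Rat.cast_div, trace_eq h3 hσ ι]
  push_cast
  linarith

end CyclicCubic

theorem sq_norm_lower_bound_of_not_rational_integer_general
    {F : Type*} [Field F] [NumberField F] [IsGalois ℚ F]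
    (h3 : Module.finrank ℚ F = 3)
    (σ : F ≃ₐ[ℚ] F) (hσ : ∀ τ : F ≃ₐ[ℚ] F, τ ∈ Subgroup.zpowers σ)
    (ι : F →+* ℝ)
    (p : ℕ) (hdisc : (p : ℤ) ^ 2 = |NumberField.discr F|)
    (g : 𝓞 F) (hg : ¬∃ n : ℤ, (g : F) = (n : F)) :
    2 * (p : ℝ) / 3 ≤ fnorm2 σ ι (g : F) := by
  set b : Fin 3 → 𝓞 F := ![1, g, RingOfIntegers.mapRingEquiv (σ : F ≃+* F) g]
  have hb : (Algebra.discr ℤ b : ℝ) = (spread σ ι g / 2) ^ 2 :=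
    CyclicCubic.discr_eq_sq_spread_div_two h3 hσ ι g
  have hspread := CyclicCubic.spread_ne_zero h3 hσ ι hg
  have hle : |discr F| ≤ |Algebra.discr ℤ b| :=
    abs_discr_le_abs_discr b (by simp [h3]) fun h ↦ hspread (by simpa [h] using hb.symm)
  have hp : (((p : ℤ) ^ 2 : ℤ) : ℝ) ≤ |(Algebra.discr ℤ b : ℝ)| := by exact_mod_cast hdisc ▸ hle
  rw [hb, abs_of_nonneg (by positivity)] at hp
  push_cast at hp
  have hspread_nonneg : 0 ≤ spread σ ι g := by unfold spread; positivity
  have hspread_ge : (p : ℝ) ≤ spread σ ι g / 2 :=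
    (pow_le_pow_iff_left₀ (Nat.cast_nonneg p) (by positivity) two_ne_zero).mp hp
  linarith [spread_le_three_mul_fnorm2 σ ι (g : F)]

/-- For a cyclic cubic field of conductor `p` (so `p² = |disc F|`), every algebraic
integer `g ∉ ℤ` satisfies `‖g‖² ≥ 2p/3`. -/
theorem sq_norm_lower_bound_of_not_rational_integer
    {F : Type*} [Field F] [NumberField F] [IsGalois ℚ F]
    (h3 : Module.finrank ℚ F = 3)
    (σ : F ≃ₐ[ℚ] F) (hσ : ∀ τ : F ≃ₐ[ℚ] F, τ ∈ Subgroup.zpowers σ)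
    (ι : F →+* ℝ)
    (p : ℕ) (hp : 0 < p) (hdisc : (p : ℤ) ^ 2 = |NumberField.discr F|)
    (g : 𝓞 F) (hg : ¬∃ n : ℤ, (g : F) = (n : F)) :
    2 * (p : ℝ) / 3 ≤ fnorm2 σ ι (g : F) :=
  sq_norm_lower_bound_of_not_rational_integer_general h3 σ hσ ι p hdisc g hg
end

section
/- Let E be a real inner product space and let Λ ⊆ E be a hexagonal lattice with ℤ-basis b₁, b₂ satisfying ‖b₁‖ = ‖b₂‖ = ‖b₂ − b₁‖ = λ₁ > 0 (so λ₁ is the length of the shortest nonzero vectors of Λ). Let w = α₁b₁ + α₂b₂ with α₁, α₂ ∈ (−1/2, 1/2]. Then the set S = { v ∈ Λ : ‖v − w‖ < λ₁ } has at most 4 elements; moreover every nonzero v ∈ S satisfies ‖v − w‖ ≥ 3λ₁/16; any two distinct nonzero v, v' ∈ S with ‖v − w‖ ≤ ‖v' − w‖ satisfy ‖v' − w‖ ≥ λ₁/2; and any three pairwise distinct nonzero v, v', v'' ∈ S with ‖v − w‖ ≤ ‖v' − w‖ ≤ ‖v'' − w‖ satisfy ‖v'' − w‖ ≥ (√3/2)λ₁.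 -/
/-!
In the basis `b₁, b₂` the squared norm is `λ₁² (x² + xy + y²)`, so nonzero lattice vectors have
length at least `λ₁`. Two lattice points that agree modulo `2Λ` are therefore at least `2λ₁` apart,
and an open ball of radius `λ₁` meets each of the four classes of `Λ / 2Λ` at most once. Two distinct
lattice points cannot both lie within `λ₁/2` of `w`. For `w` in the fundamental domain, a nonzero
lattice point within `(√3/2)λ₁` of `w` is one of the six neighbours `±b₁, ±b₂, ±(b₂ - b₁)` of `0`,
and any three of these contain two at distance `√3 λ₁` or more. Finally, a nonzero lattice point
`m b₁ + n b₂` has `|m - α₁| ≥ 1/2` or `|n - α₂| ≥ 1/2`, so its distance to `w` is at least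
`(√3/4)λ₁ ≥ 3λ₁/16`.
-/

open scoped RealInnerProductSpace

def hexForm {R : Type*} [CommRing R] (x y : R) : R := x ^ 2 + x * y + y ^ 2

-- The coordinates of the six shortest vectors `±b₁, ±b₂, ±(b₂ - b₁)`.
def hexagonVertices : Finset (ℤ × ℤ) := {(1, 0), (0, 1), (-1, 1), (-1, 0), (0, -1), (1, -1)}

@[norm_cast]
theorem Int.cast_hexForm {R : Type*} [CommRing R] (m n : ℤ) :
    ((hexForm m n : ℤ) : R) = hexForm (m : R) n := by
  push_cast [hexForm]
  rfl

theorem three_div_four_mul_sq_le_hexForm (x y : ℝ) : 3 / 4 * x ^ 2 ≤ hexForm x y := by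
  unfold hexForm
  nlinarith [sq_nonneg (x + 2 * y)]

theorem hexForm_comm {R : Type*} [CommRing R] (x y : R) : hexForm x y = hexForm y x := by
  unfold hexForm
  ring

theorem one_le_hexForm {m n : ℤ} (h : (m, n) ≠ 0) : 1 ≤ hexForm m n := by
  unfold hexForm
  rcases eq_or_ne n 0 with rfl | hn
  · have hm : m ≠ 0 := by simpa using h
    nlinarith [Int.one_le_abs hm, sq_abs m]
  · nlinarith [sq_nonneg (2 * m + n), Int.one_le_abs hn, sq_abs n]

theorem exists_three_le_hexForm_sub_of_mem_hexagonVertices :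
    ∀ p ∈ hexagonVertices, ∀ q ∈ hexagonVertices, ∀ r ∈ hexagonVertices,
      p ≠ q → p ≠ r → q ≠ r →
      3 ≤ hexForm (p.1 - q.1) (p.2 - q.2) ∨ 3 ≤ hexForm (p.1 - r.1) (p.2 - r.2) ∨
        3 ≤ hexForm (q.1 - r.1) (q.2 - r.2) := by
  unfold hexForm
  decide

section FundamentalInterval

variable {α : ℝ} (hα : α ∈ Set.Ioc (-(1 : ℝ) / 2) (1 / 2))
include hα

theorem one_div_four_le_sq_intCast_sub {m : ℤ} (hm : m ≠ 0) : 1 / 4 ≤ ((m : ℝ) - α) ^ 2 := by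
  obtain ⟨hα₀, hα₁⟩ := hα
  rcases lt_or_gt_of_ne hm with h | h
  · have : (m : ℝ) ≤ -1 := by exact_mod_cast Int.le_sub_one_of_lt h
    nlinarith
  · have : (1 : ℝ) ≤ m := by exact_mod_cast h
    nlinarith

theorem abs_le_one_of_sq_intCast_sub_lt_one {m : ℤ} (h : ((m : ℝ) - α) ^ 2 < 1) : |m| ≤ 1 := by
  obtain ⟨hα₀, hα₁⟩ := hα
  have hlo : (-2 : ℝ) < m := by nlinarith
  have hhi : (m : ℝ) < 2 := by nlinarith
  have : -2 < m := by exact_mod_cast hlo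
  have : m < 2 := by exact_mod_cast hhi
  exact abs_le.2 ⟨by omega, by omega⟩

end FundamentalInterval

section FundamentalDomain

variable {α₁ α₂ : ℝ} (hα₁ : α₁ ∈ Set.Ioc (-(1 : ℝ) / 2) (1 / 2))
  (hα₂ : α₂ ∈ Set.Ioc (-(1 : ℝ) / 2) (1 / 2))
include hα₁ hα₂

theorem three_div_sixteen_le_hexForm_intCast_sub {m n : ℤ} (h : (m, n) ≠ 0) :
    3 / 16 ≤ hexForm ((m : ℝ) - α₁) ((n : ℝ) - α₂) := by
  rcases eq_or_ne m 0 with rfl | hm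
  · have hn : n ≠ 0 := by simpa using h
    have := one_div_four_le_sq_intCast_sub hα₂ hn
    rw [hexForm_comm]
    nlinarith [three_div_four_mul_sq_le_hexForm ((n : ℝ) - α₂) ((0 : ℤ) - α₁)]
  · have := one_div_four_le_sq_intCast_sub hα₁ hm
    nlinarith [three_div_four_mul_sq_le_hexForm ((m : ℝ) - α₁) ((n : ℝ) - α₂)]

theorem mem_hexagonVertices_of_hexForm_intCast_sub_lt {m n : ℤ} (h : (m, n) ≠ 0)
    (hlt : hexForm ((m : ℝ) - α₁) ((n : ℝ) - α₂) < 3 / 4) : (m, n) ∈ hexagonVertices := by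
  have hm := abs_le_one_of_sq_intCast_sub_lt_one hα₁ (m := m) <| by
    nlinarith [three_div_four_mul_sq_le_hexForm ((m : ℝ) - α₁) ((n : ℝ) - α₂)]
  have hn := abs_le_one_of_sq_intCast_sub_lt_one hα₂ (m := n) <| by
    rw [hexForm_comm] at hlt
    nlinarith [three_div_four_mul_sq_le_hexForm ((n : ℝ) - α₂) ((m : ℝ) - α₁)]
  have corners : ¬(m = 1 ∧ n = 1) ∧ ¬(m = -1 ∧ n = -1) := by
    obtain ⟨hα₁₀, hα₁₁⟩ := hα₁
    obtain ⟨hα₂₀, hα₂₁⟩ := hα₂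
    unfold hexForm at hlt
    constructor <;> rintro ⟨rfl, rfl⟩ <;> push_cast at hlt <;> nlinarith
  simp only [hexagonVertices, Finset.mem_insert, Finset.mem_singleton, Prod.mk.injEq]
  simp only [ne_eq, Prod.mk_eq_zero, not_and] at h
  rw [abs_le] at hm hn
  omega

end FundamentalDomain

section Packing

variable {E : Type*}

theorem le_norm_sub_add_norm_sub_of_ne [SeminormedAddCommGroup E] {L : AddSubgroup E} {r : ℝ}
    (hmin : ∀ u ∈ L, u ≠ 0 → r ≤ ‖u‖) {v v' : E} (hv : v ∈ L) (hv' : v' ∈ L) (hne : v ≠ v')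
    (w : E) : r ≤ ‖v - w‖ + ‖v' - w‖ := by
  calc r ≤ ‖v - v'‖ := hmin _ (sub_mem hv hv') (sub_ne_zero.2 hne)
    _ ≤ ‖v - w‖ + ‖w - v'‖ := norm_sub_le_norm_sub_add_norm_sub v w v'
    _ = ‖v - w‖ + ‖v' - w‖ := by rw [norm_sub_rev w v']

theorem eq_of_sub_eq_two_smul_of_norm_sub_lt [NormedAddCommGroup E] [NormedSpace ℝ E]
    {L : AddSubgroup E} {r : ℝ} (hmin : ∀ u ∈ L, u ≠ 0 → r ≤ ‖u‖) {u v v' w : E} (hu : u ∈ L)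
    (huv : v' - v = (2 : ℝ) • u) (hv : ‖v - w‖ < r) (hv' : ‖v' - w‖ < r) : v = v' := by
  by_contra hne
  have hu₀ : u ≠ 0 := by
    rintro rfl
    rw [smul_zero, sub_eq_zero] at huv
    exact hne huv.symm
  have hlt : ‖v' - v‖ < 2 * r :=
    calc ‖v' - v‖ ≤ ‖v' - w‖ + ‖w - v‖ := norm_sub_le_norm_sub_add_norm_sub _ _ _
      _ < r + r := by rw [norm_sub_rev w v]; exact add_lt_add hv' hv
      _ = 2 * r := by ring
  rw [huv, norm_smul, Real.norm_two] at hlt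
  linarith [hmin u hu hu₀]

theorem exists_finset_card_le_four_of_le_norm [NormedAddCommGroup E] [NormedSpace ℝ E]
    {b₁ b₂ : E} {r : ℝ} (hmin : ∀ u ∈ AddSubgroup.closure {b₁, b₂}, u ≠ 0 → r ≤ ‖u‖) (w : E) :
    ∃ s : Finset E, {v : E | v ∈ AddSubgroup.closure {b₁, b₂} ∧ ‖v - w‖ < r} ⊆ (s : Set E) ∧
      s.card ≤ 4 := by
  classical
  set S := {v : E | v ∈ AddSubgroup.closure {b₁, b₂} ∧ ‖v - w‖ < r}
  have hcoord : ∀ v ∈ S, ∃ p : ℤ × ℤ, p.1 • b₁ + p.2 • b₂ = v := fun v hv => by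
    obtain ⟨m, n, h⟩ := AddSubgroup.mem_closure_pair.1 hv.1
    exact ⟨(m, n), h⟩
  choose! c hc using hcoord
  let parity : E → ZMod 2 × ZMod 2 := fun v => ((c v).1, (c v).2)
  have hinj : Set.InjOn parity S := by
    intro v hv v' hv' h
    simp only [parity, Prod.mk.injEq, ZMod.intCast_eq_intCast_iff_dvd_sub] at h
    obtain ⟨⟨k, hk⟩, ⟨l, hl⟩⟩ := h
    refine eq_of_sub_eq_two_smul_of_norm_sub_lt hmin
      (AddSubgroup.mem_closure_pair.2 ⟨k, l, rfl⟩) ?_ hv.2 hv'.2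
    rw [← hc v hv, ← hc v' hv']
    linear_combination (norm := module) hk • b₁ + hl • b₂
  have hfin : S.Finite := Set.Finite.of_finite_image (Set.toFinite _) hinj
  refine ⟨hfin.toFinset, by simp, ?_⟩
  calc hfin.toFinset.card ≤ (Finset.univ : Finset (ZMod 2 × ZMod 2)).card :=
        Finset.card_le_card_of_injOn parity (fun _ _ => Finset.mem_coe.2 (Finset.mem_univ _))
          (by simpa using hinj)
    _ = 4 := rfl

end Packing

section Hexagonal

variable {E : Type*} [NormedAddCommGroup E] [InnerProductSpace ℝ E] {b₁ b₂ : E} {lam : ℝ}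

theorem exists_intCast_smul_add_eq_of_mem_closure_pair {v : E}
    (hv : v ∈ AddSubgroup.closure {b₁, b₂}) (hv₀ : v ≠ 0) :
    ∃ m n : ℤ, (m, n) ≠ 0 ∧ (m : ℝ) • b₁ + (n : ℝ) • b₂ = v := by
  obtain ⟨m, n, rfl⟩ := AddSubgroup.mem_closure_pair.1 hv
  refine ⟨m, n, ?_, by simp only [Int.cast_smul_eq_zsmul]⟩
  rintro ⟨⟩
  simp at hv₀

variable (hb₁ : ‖b₁‖ = lam) (hb₂ : ‖b₂‖ = lam) (hb₁₂ : ‖b₂ - b₁‖ = lam)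
include hb₁ hb₂ hb₁₂

theorem norm_smul_add_smul_sq_eq_hexForm (x y : ℝ) :
    ‖x • b₁ + y • b₂‖ ^ 2 = lam ^ 2 * hexForm x y := by
  have hinner : ⟪b₁, b₂⟫ = lam ^ 2 / 2 := by
    have h := norm_sub_sq_real b₂ b₁
    rw [hb₁, hb₂, hb₁₂, real_inner_comm] at h
    linarith
  rw [norm_add_sq_real, norm_smul, norm_smul, real_inner_smul_left, real_inner_smul_right,
    hinner, hb₁, hb₂, mul_pow, mul_pow, Real.norm_eq_abs, Real.norm_eq_abs, sq_abs, sq_abs,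
    hexForm]
  ring

theorem norm_sub_sq_eq_hexForm (x y α₁ α₂ : ℝ) :
    ‖(x • b₁ + y • b₂) - (α₁ • b₁ + α₂ • b₂)‖ ^ 2 = lam ^ 2 * hexForm (x - α₁) (y - α₂) := by
  rw [← norm_smul_add_smul_sq_eq_hexForm hb₁ hb₂ hb₁₂]
  congr 2
  module

theorem le_norm_of_mem_closure_pair {v : E} (hv : v ∈ AddSubgroup.closure {b₁, b₂})
    (hv₀ : v ≠ 0) : lam ≤ ‖v‖ := by
  obtain ⟨m, n, hmn, rfl⟩ := exists_intCast_smul_add_eq_of_mem_closure_pair hv hv₀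
  have hQ : (1 : ℝ) ≤ hexForm (m : ℝ) n := by exact_mod_cast one_le_hexForm hmn
  have hlam : 0 ≤ lam := hb₁ ▸ norm_nonneg b₁
  refine (pow_le_pow_iff_left₀ hlam (norm_nonneg _) two_ne_zero).1 ?_
  rw [norm_smul_add_smul_sq_eq_hexForm hb₁ hb₂ hb₁₂]
  nlinarith

theorem sqrt_three_mul_le_norm_sub_add_norm_sub {p q : ℤ × ℤ}
    (h : 3 ≤ hexForm (p.1 - q.1) (p.2 - q.2)) (w : E) :
    √3 * lam ≤ ‖(p.1 : ℝ) • b₁ + (p.2 : ℝ) • b₂ - w‖ + ‖(q.1 : ℝ) • b₁ + (q.2 : ℝ) • b₂ - w‖ := by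
  set x := (p.1 : ℝ) • b₁ + (p.2 : ℝ) • b₂
  set y := (q.1 : ℝ) • b₁ + (q.2 : ℝ) • b₂
  have hQ : (3 : ℝ) ≤ hexForm ((p.1 : ℝ) - q.1) ((p.2 : ℝ) - q.2) := by exact_mod_cast h
  have hlam : 0 ≤ lam := hb₁ ▸ norm_nonneg b₁
  calc √3 * lam ≤ ‖x - y‖ := by
        refine (pow_le_pow_iff_left₀ (by positivity) (norm_nonneg _) two_ne_zero).1 ?_
        rw [norm_sub_sq_eq_hexForm hb₁ hb₂ hb₁₂, mul_pow, Real.sq_sqrt zero_le_three]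
        nlinarith
    _ ≤ ‖x - w‖ + ‖w - y‖ := norm_sub_le_norm_sub_add_norm_sub x w y
    _ = ‖x - w‖ + ‖y - w‖ := by rw [norm_sub_rev w y]

variable {α₁ α₂ : ℝ} (hα₁ : α₁ ∈ Set.Ioc (-(1 : ℝ) / 2) (1 / 2))
  (hα₂ : α₂ ∈ Set.Ioc (-(1 : ℝ) / 2) (1 / 2))
include hα₁ hα₂

theorem three_mul_lam_div_sixteen_le_norm_sub {v : E} (hv : v ∈ AddSubgroup.closure {b₁, b₂})
    (hv₀ : v ≠ 0) : 3 * lam / 16 ≤ ‖v - (α₁ • b₁ + α₂ • b₂)‖ := by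
  obtain ⟨m, n, hmn, rfl⟩ := exists_intCast_smul_add_eq_of_mem_closure_pair hv hv₀
  have hQ := three_div_sixteen_le_hexForm_intCast_sub hα₁ hα₂ hmn
  have hlam : 0 ≤ lam := hb₁ ▸ norm_nonneg b₁
  refine (pow_le_pow_iff_left₀ (by positivity) (norm_nonneg _) two_ne_zero).1 ?_
  rw [norm_sub_sq_eq_hexForm hb₁ hb₂ hb₁₂]
  nlinarith

theorem exists_mem_hexagonVertices_of_norm_sub_lt {v : E}
    (hv : v ∈ AddSubgroup.closure {b₁, b₂}) (hv₀ : v ≠ 0)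
    (hlt : ‖v - (α₁ • b₁ + α₂ • b₂)‖ < √3 / 2 * lam) :
    ∃ p ∈ hexagonVertices, (p.1 : ℝ) • b₁ + (p.2 : ℝ) • b₂ = v := by
  obtain ⟨m, n, hmn, rfl⟩ := exists_intCast_smul_add_eq_of_mem_closure_pair hv hv₀
  refine ⟨(m, n), mem_hexagonVertices_of_hexForm_intCast_sub_lt hα₁ hα₂ hmn ?_, rfl⟩
  have hlam : 0 < lam := by
    by_contra! h
    nlinarith [norm_nonneg ((m : ℝ) • b₁ + (n : ℝ) • b₂ - (α₁ • b₁ + α₂ • b₂)), Real.sqrt_nonneg 3]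
  have hsq := pow_lt_pow_left₀ hlt (norm_nonneg _) two_ne_zero
  rw [norm_sub_sq_eq_hexForm hb₁ hb₂ hb₁₂, mul_pow, div_pow, Real.sq_sqrt zero_le_three] at hsq
  nlinarith

theorem sqrt_three_div_two_mul_le_max_norm_sub {v v' v'' : E}
    (hv : v ∈ AddSubgroup.closure {b₁, b₂}) (hv' : v' ∈ AddSubgroup.closure {b₁, b₂})
    (hv'' : v'' ∈ AddSubgroup.closure {b₁, b₂}) (hv₀ : v ≠ 0) (hv₀' : v' ≠ 0) (hv₀'' : v'' ≠ 0)
    (hne : v ≠ v') (hne' : v ≠ v'') (hne'' : v' ≠ v'') :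
    √3 / 2 * lam ≤ max ‖v - (α₁ • b₁ + α₂ • b₂)‖
      (max ‖v' - (α₁ • b₁ + α₂ • b₂)‖ ‖v'' - (α₁ • b₁ + α₂ • b₂)‖) := by
  set w := α₁ • b₁ + α₂ • b₂
  by_contra! hlt
  simp only [max_lt_iff] at hlt
  obtain ⟨hlt, hlt', hlt''⟩ := hlt
  obtain ⟨p, hp, rfl⟩ := exists_mem_hexagonVertices_of_norm_sub_lt hb₁ hb₂ hb₁₂ hα₁ hα₂ hv hv₀ hlt
  obtain ⟨q, hq, rfl⟩ :=
    exists_mem_hexagonVertices_of_norm_sub_lt hb₁ hb₂ hb₁₂ hα₁ hα₂ hv' hv₀' hlt'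
  obtain ⟨s, hs, rfl⟩ :=
    exists_mem_hexagonVertices_of_norm_sub_lt hb₁ hb₂ hb₁₂ hα₁ hα₂ hv'' hv₀'' hlt''
  have hpq : p ≠ q := by rintro rfl; exact hne rfl
  have hps : p ≠ s := by rintro rfl; exact hne' rfl
  have hqs : q ≠ s := by rintro rfl; exact hne'' rfl
  rcases exists_three_le_hexForm_sub_of_mem_hexagonVertices p hp q hq s hs hpq hps hqs
    with h | h | h <;>
  linarith [sqrt_three_mul_le_norm_sub_add_norm_sub hb₁ hb₂ hb₁₂ h w]

end Hexagonal

theorem hexagonal_lattice_points_near_fundamental_domain_general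
    {E : Type*} [NormedAddCommGroup E] [InnerProductSpace ℝ E]
    (b₁ b₂ : E) (lam : ℝ)
    (hb₁ : ‖b₁‖ = lam) (hb₂ : ‖b₂‖ = lam) (hb₁₂ : ‖b₂ - b₁‖ = lam)
    (α₁ α₂ : ℝ) (hα₁ : α₁ ∈ Set.Ioc (-(1 : ℝ)/2) (1/2)) (hα₂ : α₂ ∈ Set.Ioc (-(1 : ℝ)/2) (1/2))
    (w : E) (hw : w = α₁ • b₁ + α₂ • b₂) :
    (∃ s : Finset E,
        {v : E | v ∈ AddSubgroup.closure {b₁, b₂} ∧ ‖v - w‖ < lam} ⊆ (s : Set E) ∧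
        s.card ≤ 4) ∧
    (∀ v ∈ AddSubgroup.closure {b₁, b₂}, v ≠ 0 → ‖v - w‖ < lam →
      3 * lam / 16 ≤ ‖v - w‖) ∧
    (∀ v ∈ AddSubgroup.closure {b₁, b₂}, ∀ v' ∈ AddSubgroup.closure {b₁, b₂},
      v ≠ 0 → v' ≠ 0 → v ≠ v' → ‖v - w‖ < lam → ‖v' - w‖ < lam →
      ‖v - w‖ ≤ ‖v' - w‖ → lam / 2 ≤ ‖v' - w‖) ∧
    (∀ v ∈ AddSubgroup.closure {b₁, b₂}, ∀ v' ∈ AddSubgroup.closure {b₁, b₂},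
      ∀ v'' ∈ AddSubgroup.closure {b₁, b₂},
      v ≠ 0 → v' ≠ 0 → v'' ≠ 0 → v ≠ v' → v ≠ v'' → v' ≠ v'' →
      ‖v - w‖ < lam → ‖v' - w‖ < lam → ‖v'' - w‖ < lam →
      ‖v - w‖ ≤ ‖v' - w‖ → ‖v' - w‖ ≤ ‖v'' - w‖ →
      Real.sqrt 3 / 2 * lam ≤ ‖v'' - w‖) := by
  subst hw
  have hmin : ∀ u ∈ AddSubgroup.closure {b₁, b₂}, u ≠ 0 → lam ≤ ‖u‖ :=
    fun u hu hu₀ => le_norm_of_mem_closure_pair hb₁ hb₂ hb₁₂ hu hu₀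
  refine ⟨exists_finset_card_le_four_of_le_norm hmin _, ?_, ?_, ?_⟩
  · intro v hv hv₀ _
    exact three_mul_lam_div_sixteen_le_norm_sub hb₁ hb₂ hb₁₂ hα₁ hα₂ hv hv₀
  · intro v hv v' hv' _ _ hne _ _ hle
    linarith [le_norm_sub_add_norm_sub_of_ne hmin hv hv' hne (α₁ • b₁ + α₂ • b₂)]
  · intro v hv v' hv' v'' hv'' hv₀ hv₀' hv₀'' hne hne' hne'' _ _ _ hle hle'
    refine (sqrt_three_div_two_mul_le_max_norm_sub hb₁ hb₂ hb₁₂ hα₁ hα₂ hv hv' hv'' hv₀ hv₀' hv₀''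
      hne hne' hne'').trans ?_
    exact max_le (hle.trans hle') (max_le hle' le_rfl)

/-- Points of a hexagonal lattice near a point `w` of the fundamental domain:
there are at most `4` lattice points at distance `< λ₁` from `w`, every nonzero such
point is at distance `≥ 3λ₁/16`; the second-closest nonzero one is at distance `≥ λ₁/2`
and the third-closest nonzero one is at distance `≥ (√3/2)λ₁`. -/
theorem hexagonal_lattice_points_near_fundamental_domain
    {E : Type*} [NormedAddCommGroup E] [InnerProductSpace ℝ E]
    (b₁ b₂ : E) (lam : ℝ) (hlam : 0 < lam)
    (hb₁ : ‖b₁‖ = lam) (hb₂ : ‖b₂‖ = lam) (hb₁₂ : ‖b₂ - b₁‖ = lam)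
    (α₁ α₂ : ℝ) (hα₁ : α₁ ∈ Set.Ioc (-(1 : ℝ)/2) (1/2)) (hα₂ : α₂ ∈ Set.Ioc (-(1 : ℝ)/2) (1/2))
    (w : E) (hw : w = α₁ • b₁ + α₂ • b₂) :
    (∃ s : Finset E,
        {v : E | v ∈ AddSubgroup.closure {b₁, b₂} ∧ ‖v - w‖ < lam} ⊆ (s : Set E) ∧
        s.card ≤ 4) ∧
    (∀ v ∈ AddSubgroup.closure {b₁, b₂}, v ≠ 0 → ‖v - w‖ < lam →
      3 * lam / 16 ≤ ‖v - w‖) ∧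
    (∀ v ∈ AddSubgroup.closure {b₁, b₂}, ∀ v' ∈ AddSubgroup.closure {b₁, b₂},
      v ≠ 0 → v' ≠ 0 → v ≠ v' → ‖v - w‖ < lam → ‖v' - w‖ < lam →
      ‖v - w‖ ≤ ‖v' - w‖ → lam / 2 ≤ ‖v' - w‖) ∧
    (∀ v ∈ AddSubgroup.closure {b₁, b₂}, ∀ v' ∈ AddSubgroup.closure {b₁, b₂},
      ∀ v'' ∈ AddSubgroup.closure {b₁, b₂},
      v ≠ 0 → v' ≠ 0 → v'' ≠ 0 → v ≠ v' → v ≠ v'' → v' ≠ v'' →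
      ‖v - w‖ < lam → ‖v' - w‖ < lam → ‖v'' - w‖ < lam →
      ‖v - w‖ ≤ ‖v' - w‖ → ‖v' - w‖ ≤ ‖v'' - w‖ →
      Real.sqrt 3 / 2 * lam ≤ ‖v'' - w‖) :=
  hexagonal_lattice_points_near_fundamental_domain_general b₁ b₂ lam hb₁ hb₂ hb₁₂ α₁ α₂ hα₁ hα₂ w hw
end

section
/- Let L be an additive subgroup of Euclidean space ℝ³ and let a > 0 be such that every nonzero x ∈ L satisfies ‖x‖ ≥ a. Then for every M ≥ a² and every α > 0, one has ∑_{x ∈ L, ‖x‖² ≥ M} e^{−α‖x‖²} ≤ α ∫_{M}^{∞} ( (2√t/a + 1)³ − (2√M/a − 1)³ ) e^{−αt} dt. -/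
/-!
Around each lattice point `x` with `M ≤ ‖x‖² ≤ t` put the ball of radius `a / 2`. These balls are
pairwise disjoint and lie in the shell between the radii `√M - a / 2` and `√t + a / 2`, so
comparing volumes bounds the number `N(t)` of such points by `(2√t/a + 1)³ - (2√M/a - 1)³`.
Writing `e^{-α‖x‖²} = α ∫_{‖x‖²}^∞ e^{-αt} dt` and exchanging sum and integral gives
`∑ e^{-α‖x‖²} = α ∫_M^∞ N(t) e^{-αt} dt`, and the bound on `N(t)` finishes the proof.
-/

open MeasureTheory

open Metric Set Module Real Filter Asymptotics
open scoped ENNReal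

-- The volume of the shell `r - a/2 ≤ ‖x‖ ≤ R + a/2` in units of the volume of a ball of radius
-- `a/2`, in dimension `n`.
noncomputable def packingBound (n : ℕ) (a r R : ℝ) : ℝ :=
  (2 * R / a + 1) ^ n - (2 * r / a - 1) ^ n

theorem packingBound_nonneg {n : ℕ} {a r R : ℝ} (ha : 0 < a) (har : a ≤ 2 * r) (hrR : r ≤ R) :
    0 ≤ packingBound n a r R := by
  have h0 : 0 ≤ 2 * r / a - 1 := by rw [sub_nonneg, one_le_div ha]; exact har
  have h1 : 2 * r / a - 1 ≤ 2 * R / a + 1 := by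
    have : 2 * r / a ≤ 2 * R / a := by gcongr
    linarith
  exact sub_nonneg.2 (pow_le_pow_left₀ h0 h1 n)

section Packing

variable {E : Type*} [NormedAddCommGroup E]

theorem sum_measure_ball_add_measure_ball_le [MeasurableSpace E] [OpensMeasurableSpace E]
    (μ : Measure E) {a r R : ℝ} (ha : 0 ≤ a) (hrR : r ≤ R) {s : Finset E}
    (hsep : (s : Set E).Pairwise fun x y => a ≤ dist x y) (hs : ∀ x ∈ s, r ≤ ‖x‖ ∧ ‖x‖ ≤ R) :
    ∑ x ∈ s, μ (ball x (a / 2)) + μ (ball 0 (r - a / 2)) ≤ μ (closedBall 0 (R + a / 2)) := by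
  have hdisj : (s : Set E).PairwiseDisjoint fun x => ball x (a / 2) :=
    hsep.mono' fun x y h => ball_disjoint_ball (by linarith)
  have hcore : Disjoint (⋃ x ∈ s, ball x (a / 2)) (ball 0 (r - a / 2)) :=
    disjoint_iUnion₂_left.2 fun x hx =>
      ball_disjoint_ball (by rw [dist_zero_right]; linarith [(hs x hx).1])
  have hsub : (⋃ x ∈ s, ball x (a / 2)) ∪ ball 0 (r - a / 2) ⊆ closedBall 0 (R + a / 2) :=
    union_subset (iUnion₂_subset fun x hx => ball_subset_closedBall.trans
        (closedBall_subset_closedBall' (by rw [dist_zero_right]; linarith [(hs x hx).2])))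
      (ball_subset_closedBall.trans (closedBall_subset_closedBall (by linarith)))
  calc ∑ x ∈ s, μ (ball x (a / 2)) + μ (ball 0 (r - a / 2))
      = μ ((⋃ x ∈ s, ball x (a / 2)) ∪ ball 0 (r - a / 2)) := by
        rw [measure_union hcore measurableSet_ball,
          measure_biUnion_finset hdisj fun _ _ => measurableSet_ball]
    _ ≤ μ (closedBall 0 (R + a / 2)) := measure_mono hsub

theorem card_le_packingBound_of_pairwise_le_dist [NormedSpace ℝ E] [FiniteDimensional ℝ E]
    [Nontrivial E] {a r R : ℝ} (ha : 0 < a) (har : a ≤ 2 * r) (hrR : r ≤ R) {s : Finset E}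
    (hsep : (s : Set E).Pairwise fun x y => a ≤ dist x y) (hs : ∀ x ∈ s, r ≤ ‖x‖ ∧ ‖x‖ ≤ R) :
    (s.card : ℝ) ≤ packingBound (finrank ℝ E) a r R := by
  borelize E
  set μ : Measure E := Measure.addHaar
  set n := finrank ℝ E
  have hvol := sum_measure_ball_add_measure_ball_le μ ha.le hrR hsep hs
  rw [Finset.sum_congr rfl fun x _ => μ.addHaar_ball x (by positivity : 0 ≤ a / 2),
    Finset.sum_const, nsmul_eq_mul, μ.addHaar_ball 0 (by linarith : 0 ≤ r - a / 2),
    μ.addHaar_closedBall 0 (by linarith : 0 ≤ R + a / 2), ← mul_assoc, ← add_mul,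
    ENNReal.mul_le_mul_iff_left (measure_ball_pos μ _ one_pos).ne' measure_ball_lt_top.ne,
    ← ENNReal.ofReal_natCast, ← ENNReal.ofReal_mul (by positivity),
    ← ENNReal.ofReal_add (by positivity) (pow_nonneg (by linarith) _),
    ENNReal.ofReal_le_ofReal_iff (pow_nonneg (by linarith) _)] at hvol
  have hscale : ∀ ρ, (2 * ρ / a) ^ n = ρ ^ n / (a / 2) ^ n := fun ρ => by
    rw [← div_pow]; congr 1; field_simp
  rw [packingBound, show 2 * R / a + 1 = 2 * (R + a / 2) / a by field_simp,
    show 2 * r / a - 1 = 2 * (r - a / 2) / a by field_simp, hscale, hscale, ← sub_div,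
    le_div_iff₀ (by positivity)]
  linarith

end Packing

section Lattice

variable {E : Type*} [NormedAddCommGroup E] (L : AddSubgroup E) {a : ℝ}

theorem AddSubgroup.discreteTopology_of_le_norm (ha : 0 < a)
    (hL : ∀ x ∈ L, x ≠ 0 → a ≤ ‖x‖) : DiscreteTopology L := by
  refine discreteTopology_iff_isOpen_singleton_zero.mpr ⟨ball 0 a, isOpen_ball, ?_⟩
  ext x
  simp only [mem_preimage, mem_ball_zero_iff, mem_singleton_iff]
  refine ⟨fun hx => ?_, fun hx => by simpa [hx] using ha⟩
  by_contra hx0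
  exact (hL x x.2 (by exact_mod_cast hx0)).not_gt hx

theorem AddSubgroup.finite_setOf_norm_le [ProperSpace E] (ha : 0 < a)
    (hL : ∀ x ∈ L, x ≠ 0 → a ≤ ‖x‖) (R : ℝ) : {x | x ∈ L ∧ ‖x‖ ≤ R}.Finite := by
  have := L.discreteTopology_of_le_norm ha hL
  exact (finite_isBounded_inter_isClosed DiscreteTopology.isDiscrete
    (isBounded_closedBall (x := 0) (r := R)) L.isClosed_of_discrete).subset
      fun x hx => ⟨mem_closedBall_zero_iff.2 hx.2, hx.1⟩

theorem AddSubgroup.countable_of_le_norm [SecondCountableTopology E] (ha : 0 < a)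
    (hL : ∀ x ∈ L, x ≠ 0 → a ≤ ‖x‖) : (L : Set E).Countable :=
  have := L.discreteTopology_of_le_norm ha hL
  countable_coe_iff.1 (TopologicalSpace.separableSpace_iff_countable.1 inferInstance)

theorem AddSubgroup.encard_annulus_le [NormedSpace ℝ E] [FiniteDimensional ℝ E]
    [Nontrivial E] (ha : 0 < a) (hL : ∀ x ∈ L, x ≠ 0 → a ≤ ‖x‖) {r R : ℝ} (har : a ≤ 2 * r)
    (hrR : r ≤ R) :
    ({x | x ∈ L ∧ r ≤ ‖x‖ ∧ ‖x‖ ≤ R}.encard : ℝ≥0∞) ≤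
      ENNReal.ofReal (packingBound (finrank ℝ E) a r R) := by
  have hfin : {x | x ∈ L ∧ r ≤ ‖x‖ ∧ ‖x‖ ≤ R}.Finite :=
    (L.finite_setOf_norm_le ha hL R).subset fun x hx => ⟨hx.1, hx.2.2⟩
  rw [hfin.encard_eq_coe_toFinset_card, ENat.toENNReal_coe, ← ENNReal.ofReal_natCast]
  refine ENNReal.ofReal_le_ofReal (card_le_packingBound_of_pairwise_le_dist (s := hfin.toFinset)
    ha har hrR ?_ fun x hx => (hfin.mem_toFinset.1 hx).2)
  intro x hx y hy hxy
  rw [hfin.coe_toFinset] at hx hy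
  rw [dist_eq_norm]
  exact hL _ (L.sub_mem hx.1 hy.1) (sub_ne_zero.2 hxy)

end Lattice

theorem isBigO_packingBound_sqrt (n : ℕ) (a r : ℝ) :
    (fun t => packingBound n a r √t) =O[atTop] (· ^ n) := by
  have hsqrt : (fun t => √t) =O[atTop] id := by
    refine IsBigO.of_bound 1 ?_
    filter_upwards [eventually_ge_atTop 1] with t ht
    rw [norm_of_nonneg (sqrt_nonneg t), one_mul, id, norm_of_nonneg (by linarith)]
    exact sqrt_le_self_iff.2 (Or.inr ht)
  have hbase : (fun t => 2 * √t / a + 1) =O[atTop] id :=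
    ((hsqrt.const_mul_left (2 / a)).add (isLittleO_const_id_atTop 1).isBigO).congr_left
      fun t => by ring
  have hconst : (fun _ => (2 * r / a - 1) ^ n) =O[atTop] (· ^ n : ℝ → ℝ) := by
    refine (isBigO_const_one ℝ _ _).trans (IsBigO.of_bound 1 ?_)
    filter_upwards [eventually_ge_atTop 1] with t ht
    rw [norm_one, one_mul, norm_of_nonneg (by positivity)]
    exact one_le_pow₀ ht
  exact (hbase.pow n).sub hconst

theorem integrableOn_Ioi_mul_exp_neg_mul_of_isBigO_pow {f : ℝ → ℝ} {α M : ℝ} {k : ℕ}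
    (hα : 0 < α) (hf : ContinuousOn f (Ici M)) (hfk : f =O[atTop] (· ^ k)) :
    IntegrableOn (fun t => f t * exp (-α * t)) (Ioi M) := by
  refine integrable_of_isBigO_exp_neg (half_pos hα) (hf.mul (by fun_prop)) ?_
  refine ((hfk.trans_isLittleO (isLittleO_pow_exp_pos_mul_atTop k (half_pos hα))).isBigO.mul
    (isBigO_refl (fun t => exp (-α * t)) atTop)).congr_right fun t => ?_
  rw [← exp_add]
  ring_nf

theorem lintegral_Ioi_ofReal_mul_exp_neg_mul {α : ℝ} (hα : 0 < α) (s : ℝ) :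
    ∫⁻ t in Ioi s, ENNReal.ofReal (α * exp (-α * t)) = ENNReal.ofReal (exp (-α * s)) := by
  rw [← ofReal_integral_eq_lintegral_ofReal ((exp_neg_integrableOn_Ioi s hα).const_mul α)
    (ae_of_all _ fun t => by positivity), integral_const_mul,
    integral_exp_mul_Ioi (by linarith : -α < 0)]
  congr 1
  field_simp

theorem tsum_ofReal_exp_neg_mul_eq_lintegral_encard {ι : Type*} [Countable ι] (f : ι → ℝ)
    {α M : ℝ} (hα : 0 < α) (hM : ∀ i, M ≤ f i) :
    ∑' i, ENNReal.ofReal (exp (-α * f i)) =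
      ∫⁻ t in Ioi M, {i | f i < t}.encard * ENNReal.ofReal (α * exp (-α * t)) := by
  set g : ℝ → ℝ≥0∞ := fun t => ENNReal.ofReal (α * exp (-α * t))
  have hg : Measurable g := by fun_prop
  calc ∑' i, ENNReal.ofReal (exp (-α * f i))
      = ∑' i, ∫⁻ t in Ioi M, (Ioi (f i)).indicator g t := by
        refine tsum_congr fun i => ?_
        rw [lintegral_indicator measurableSet_Ioi, Measure.restrict_restrict measurableSet_Ioi,
          inter_eq_left.2 (Ioi_subset_Ioi (hM i)), lintegral_Ioi_ofReal_mul_exp_neg_mul hα]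
    _ = ∫⁻ t in Ioi M, ∑' i, (Ioi (f i)).indicator g t :=
        (lintegral_tsum fun i => (hg.indicator measurableSet_Ioi).aemeasurable).symm
    _ = ∫⁻ t in Ioi M, {i | f i < t}.encard * g t := by
        congr 1 with t
        rw [← ENNReal.tsum_set_const, tsum_subtype {i | f i < t} fun _ => g t]
        simp [indicator_apply]

theorem tsum_exp_neg_mul_le_of_encard_le {ι : Type*} [Countable ι] (f : ι → ℝ) {c : ℝ → ℝ}
    {α M : ℝ} (hα : 0 < α) (hM : ∀ i, M ≤ f i) (hc : ∀ t ∈ Ioi M, 0 ≤ c t)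
    (hcount : ∀ t ∈ Ioi M, ({i | f i < t}.encard : ℝ≥0∞) ≤ ENNReal.ofReal (c t))
    (hint : IntegrableOn (fun t => c t * exp (-α * t)) (Ioi M)) :
    ∑' i, exp (-α * f i) ≤ α * ∫ t in Ioi M, c t * exp (-α * t) := by
  have hnonneg : ∀ t ∈ Ioi M, 0 ≤ α * (c t * exp (-α * t)) := fun t ht => by
    have := hc t ht
    positivity
  have key : ∑' i, ENNReal.ofReal (exp (-α * f i)) ≤
      ENNReal.ofReal (α * ∫ t in Ioi M, c t * exp (-α * t)) := by
    rw [tsum_ofReal_exp_neg_mul_eq_lintegral_encard f hα hM, ← integral_const_mul,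
      ofReal_integral_eq_lintegral_ofReal (hint.const_mul α)
        ((ae_restrict_iff' measurableSet_Ioi).2 (ae_of_all _ hnonneg))]
    refine setLIntegral_mono' measurableSet_Ioi fun t ht => ?_
    rw [mul_left_comm, ENNReal.ofReal_mul (hc t ht)]
    gcongr
    exact hcount t ht
  have hRHS : 0 ≤ α * ∫ t in Ioi M, c t * exp (-α * t) := by
    rw [← integral_const_mul]
    exact setIntegral_nonneg measurableSet_Ioi hnonneg
  -- `ENNReal.tsum_toReal_eq` needs no summability: a non-summable real `tsum` is `0` on both sides.
  simpa only [ENNReal.tsum_toReal_eq fun _ => ENNReal.ofReal_ne_top,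
    ENNReal.toReal_ofReal (exp_pos _).le] using ENNReal.toReal_le_of_le_ofReal hRHS key

/-- An upper bound for the tail `∑_{x ∈ L, ‖x‖² ≥ M} e^{−α‖x‖²}` of a theta-like series
over a lattice `L ⊆ ℝ³` whose nonzero vectors have length `≥ a`. -/
theorem lattice_sum_tail_bound
    (L : AddSubgroup (EuclideanSpace ℝ (Fin 3)))
    (a : ℝ) (ha : 0 < a)
    (hL : ∀ x ∈ L, x ≠ 0 → a ≤ ‖x‖)
    (M : ℝ) (hM : a ^ 2 ≤ M) (α : ℝ) (hα : 0 < α) :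
    ∑' x : {x : EuclideanSpace ℝ (Fin 3) // x ∈ L ∧ M ≤ ‖x‖ ^ 2},
        Real.exp (-α * ‖(x : EuclideanSpace ℝ (Fin 3))‖ ^ 2) ≤
      α * ∫ t in Set.Ioi M,
        ((2 * Real.sqrt t / a + 1) ^ 3 - (2 * Real.sqrt M / a - 1) ^ 3) *
          Real.exp (-α * t) := by
  have ha2M : a ≤ 2 * √M := by linarith [le_sqrt_of_sq_le hM]
  let S := {x : EuclideanSpace ℝ (Fin 3) // x ∈ L ∧ M ≤ ‖x‖ ^ 2}
  have : Countable S := ((L.countable_of_le_norm ha hL).mono fun x hx => hx.1).to_subtype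
  refine tsum_exp_neg_mul_le_of_encard_le (fun x : S => ‖(x : EuclideanSpace ℝ (Fin 3))‖ ^ 2)
    hα (fun x => x.2.2) (c := fun t => packingBound 3 a √M √t)
    (fun t ht => packingBound_nonneg ha ha2M (sqrt_le_sqrt ht.le)) (fun t ht => ?_)
    (integrableOn_Ioi_mul_exp_neg_mul_of_isBigO_pow hα (by unfold packingBound; fun_prop)
      (isBigO_packingBound_sqrt 3 a √M))
  calc _ ≤ ({x | x ∈ L ∧ √M ≤ ‖x‖ ∧ ‖x‖ ≤ √t}.encard : ℝ≥0∞) := by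
        rw [← Subtype.val_injective.encard_image]
        refine ENat.toENNReal_le.2 (encard_le_encard ?_)
        rintro _ ⟨x, hx, rfl⟩
        exact ⟨x.2.1, (sqrt_le_left (norm_nonneg _)).2 x.2.2, le_sqrt_of_sq_le hx.le⟩
    _ ≤ _ := by
        simpa only [finrank_euclideanSpace_fin] using
          L.encard_annulus_le ha hL ha2M (sqrt_le_sqrt ht.le)
end

section
/- Let L be an additive subgroup of Euclidean space ℝ³ such that every nonzero x ∈ L satisfies ‖x‖² ≥ 3. Then: (i) ∑_{x ∈ L, ‖x‖² ≥ 3·2^{2/3}} e^{−π‖x‖²} < 137.648·10⁻⁶; (ii) ∑_{x ∈ L, ‖x‖² ≥ 10} e^{−(π−1/2)‖x‖²} < 0.001·10⁻⁶; (iii) ∑_{x ∈ L, ‖x‖² ≥ 10} e^{−1.568075‖x‖²} < 23.399·10⁻⁶. -/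
/-!
Since `L` is `√3`-separated, the balls of radius `√3/2` about its points are disjoint, so comparing
volumes, at most `(2R/√3 + 1)³` points of `L` have norm at most `R`. Cutting `‖x‖² ≥ a` into shells
of width `δ` and summing by parts against `t ↦ e^{-ct}`, a count `N₀ ρ^j` of the points with
`‖x‖² < a + (j+1)δ` bounds the tail by `N₀ (1 - e^{-cδ}) e^{-ca} / (1 - ρ e^{-cδ})`. The three
estimates are this bound evaluated with elementary bounds on `exp`.
-/

open MeasureTheory Metric Module Finset Real
open scoped ENNReal

theorem tsum_ofReal_mul_pow {A p : ℝ} (hA : 0 ≤ A) (hp : 0 ≤ p) (hp1 : p < 1) :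
    ∑' i : ℕ, ENNReal.ofReal (A * p ^ i) = ENNReal.ofReal (A / (1 - p)) := by
  rw [← ENNReal.ofReal_tsum_of_nonneg (fun i => by positivity)
    ((summable_geometric_of_lt_one hp hp1).mul_left A), tsum_mul_left,
    tsum_geometric_of_lt_one hp hp1, div_eq_mul_inv]

-- Summation by parts: `e^{-c(a + kδ)} = ∑_{j ≥ k} (1 - e^{-cδ}) e^{-c(a + jδ)}`.
theorem ofReal_exp_neg_le_tsum_ite {a c δ y : ℝ} (hc : 0 < c) (hδ : 0 < δ) (hy : a ≤ y) :
    ENNReal.ofReal (exp (-c * y)) ≤ ∑' j : ℕ, if y < a + (j + 1) * δ then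
      ENNReal.ofReal ((1 - exp (-(c * δ))) * exp (-(c * a)) * exp (-(c * δ)) ^ j) else 0 := by
  set q := exp (-(c * δ)) with hq
  have hq1 : q < 1 := exp_lt_one_iff.2 (by nlinarith)
  set k := ⌊(y - a) / δ⌋₊
  have hk : k * δ ≤ y - a := (le_div_iff₀ hδ).1 (Nat.floor_le (div_nonneg (by linarith) hδ.le))
  have hk' : y - a < (k + 1) * δ := (div_lt_iff₀ hδ).1 (Nat.lt_floor_add_one _)
  calc ENNReal.ofReal (exp (-c * y)) ≤ ENNReal.ofReal (exp (-(c * a)) * q ^ k) := by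
        rw [hq, ← exp_nat_mul, ← exp_add]
        gcongr
        nlinarith
    _ = ∑' i, ENNReal.ofReal ((1 - q) * exp (-(c * a)) * q ^ (i + k)) := by
        simp_rw [pow_add, ← mul_assoc, mul_comm _ (q ^ k), ← mul_assoc]
        rw [tsum_ofReal_mul_pow (mul_nonneg (mul_nonneg (pow_nonneg (exp_pos _).le _) (by linarith))
          (exp_pos _).le) (exp_pos _).le hq1]
        rw [← hq]
        congr 1
        field_simp [(by linarith : 1 - q ≠ 0)]
    _ ≤ _ := by
        refine (tsum_congr fun i => ?_).trans_le
          (ENNReal.tsum_comp_le_tsum_of_injective (add_left_injective k) _)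
        rw [if_pos]
        push_cast
        nlinarith

theorem tsum_exp_neg_le_of_card_le {T : Type*} (r : T → ℝ) {a c δ N₀ ρ : ℝ} (hc : 0 < c)
    (hδ : 0 < δ) (hρ : 0 ≤ ρ) (hr : ∀ x, a ≤ r x)
    (hcard : ∀ (j : ℕ) (F : Finset T), (∀ x ∈ F, r x < a + (j + 1) * δ) →
      (#F : ℝ) ≤ N₀ * ρ ^ j)
    (hρq : ρ * exp (-(c * δ)) < 1) :
    ∑' x, exp (-c * r x) ≤
      N₀ * (1 - exp (-(c * δ))) * exp (-(c * a)) / (1 - ρ * exp (-(c * δ))) := by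
  set q := exp (-(c * δ))
  have hq1 : q < 1 := exp_lt_one_iff.2 (by nlinarith)
  have hN₀ : 0 ≤ N₀ := by simpa using hcard 0 ∅ (by simp)
  set A := (1 - q) * exp (-(c * a))
  have hA : 0 ≤ A := mul_nonneg (by linarith) (exp_pos _).le
  let w : ℕ → ℝ≥0∞ := fun j => ENNReal.ofReal (A * q ^ j)
  have hshell (j : ℕ) :
      ∑' x, (if r x < a + (j + 1) * δ then w j else 0) ≤ ENNReal.ofReal (N₀ * ρ ^ j) * w j := by
    rw [ENNReal.tsum_eq_iSup_sum]
    refine iSup_le fun F => ?_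
    rw [← sum_filter, sum_const, nsmul_eq_mul, ← ENNReal.ofReal_natCast]
    gcongr
    exact hcard j _ fun x hx => (mem_filter.1 hx).2
  have hsum :
      ∑' x, ENNReal.ofReal (exp (-c * r x)) ≤ ENNReal.ofReal (N₀ * A / (1 - ρ * q)) :=
    calc _ ≤ ∑' x, ∑' j : ℕ, (if r x < a + (j + 1) * δ then w j else 0) :=
          ENNReal.tsum_le_tsum fun x => ofReal_exp_neg_le_tsum_ite hc hδ (hr x)
      _ = ∑' j : ℕ, ∑' x, (if r x < a + (j + 1) * δ then w j else 0) := ENNReal.tsum_comm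
      _ ≤ ∑' j, ENNReal.ofReal (N₀ * ρ ^ j) * w j := ENNReal.tsum_le_tsum hshell
      _ = ENNReal.ofReal (N₀ * A / (1 - ρ * q)) := by
          simp_rw [w, ← ENNReal.ofReal_mul (by positivity : 0 ≤ N₀ * ρ ^ _),
            show ∀ j : ℕ, N₀ * ρ ^ j * (A * q ^ j) = N₀ * A * (ρ * q) ^ j from
              fun j => by ring]
          rw [tsum_ofReal_mul_pow (by positivity) (by positivity) hρq]
  calc ∑' x, exp (-c * r x) = (∑' x, ENNReal.ofReal (exp (-c * r x))).toReal := by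
        rw [ENNReal.tsum_toReal_eq fun _ => ENNReal.ofReal_ne_top]
        simp only [ENNReal.toReal_ofReal (exp_pos _).le]
    _ ≤ (ENNReal.ofReal (N₀ * A / (1 - ρ * q))).toReal :=
        ENNReal.toReal_mono ENNReal.ofReal_ne_top hsum
    _ = N₀ * (1 - q) * exp (-(c * a)) / (1 - ρ * q) := by
        rw [ENNReal.toReal_ofReal (div_nonneg (by positivity) (by linarith)), ← mul_assoc]

theorem card_mul_pow_finrank_le_of_pairwise_le_dist {E : Type*} [NormedAddCommGroup E]
    [NormedSpace ℝ E] [FiniteDimensional ℝ E] [Nontrivial E] (F : Finset E) {r R : ℝ}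
    (hr : 0 < r) (hR : 0 ≤ R) (hF : ∀ x ∈ F, ‖x‖ ≤ R)
    (hsep : (F : Set E).Pairwise fun x y => 2 * r ≤ dist x y) :
    (#F : ℝ) * r ^ finrank ℝ E ≤ (R + r) ^ finrank ℝ E := by
  borelize E
  let μ : Measure E := Measure.addHaar
  have hdisj : (F : Set E).PairwiseDisjoint fun x => ball x r :=
    fun x hx y hy hxy => ball_disjoint_ball (by linarith [hsep hx hy hxy])
  have hsub : ⋃ x ∈ F, ball x r ⊆ ball 0 (R + r) := by
    refine Set.iUnion₂_subset fun x hx => ball_subset_ball' ?_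
    rw [dist_zero_right]; linarith [hF x hx]
  have hvol := (measure_biUnion_finset hdisj fun x _ => measurableSet_ball).symm.trans_le
    (measure_mono (μ := μ) hsub)
  simp only [μ.addHaar_ball _ hr.le, μ.addHaar_ball _ (by positivity : 0 ≤ R + r), sum_const,
    nsmul_eq_mul, ← mul_assoc] at hvol
  have h := (ENNReal.mul_le_mul_iff_left (measure_ball_pos μ 0 one_pos).ne'
    measure_ball_lt_top.ne).mp hvol
  rw [← ENNReal.ofReal_natCast, ← ENNReal.ofReal_mul (by positivity)] at h
  exact (ENNReal.ofReal_le_ofReal_iff (by positivity)).mp h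

theorem AddSubgroup.card_le_of_forall_norm_le {E : Type*} [NormedAddCommGroup E]
    [NormedSpace ℝ E] [FiniteDimensional ℝ E] [Nontrivial E] (L : AddSubgroup E) {m R : ℝ}
    (hm : 0 < m) (hR : 0 ≤ R) (hL : ∀ x ∈ L, x ≠ 0 → m ≤ ‖x‖) (F : Finset E)
    (hF : ∀ x ∈ F, x ∈ L ∧ ‖x‖ ≤ R) :
    (#F : ℝ) ≤ (2 * R / m + 1) ^ finrank ℝ E := by
  have hsep : (F : Set E).Pairwise fun x y => 2 * (m / 2) ≤ dist x y := by
    intro x hx y hy hxy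
    show _ ≤ _
    rw [dist_eq_norm, mul_div_cancel₀ _ two_ne_zero]
    exact hL _ (sub_mem (hF x hx).1 (hF y hy).1) (sub_ne_zero.2 hxy)
  have h := card_mul_pow_finrank_le_of_pairwise_le_dist F (half_pos hm) hR
    (fun x hx => (hF x hx).2) hsep
  rw [show R + m / 2 = (2 * R / m + 1) * (m / 2) by field_simp, mul_pow] at h
  exact le_of_mul_le_mul_right h (by positivity)

theorem sqrt_add_le_sqrt_mul_exp {u v : ℝ} (hu : 0 < u) :
    √(u + v) ≤ √u * exp (v / (2 * u)) := by
  rw [← sqrt_sq (exp_pos _).le, ← sqrt_mul hu.le, ← exp_nat_mul]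
  refine sqrt_le_sqrt ?_
  calc u + v = u * (v / u + 1) := by field_simp; ring
    _ ≤ u * exp (v / u) := by gcongr; exact add_one_le_exp _
    _ = u * exp ((2 : ℕ) * (v / (2 * u))) := by congr 2; field_simp; norm_num

theorem two_mul_sqrt_add_div_add_one_pow_le {u v m : ℝ} (n : ℕ) (hu : 0 < u) (hv : 0 ≤ v)
    (hm : 0 ≤ m) :
    (2 * √(u + v) / m + 1) ^ n ≤ (2 * √u / m + 1) ^ n * exp (n * v / (2 * u)) := by
  have he : 1 ≤ exp (v / (2 * u)) := one_le_exp (by positivity)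
  have h : 2 * √(u + v) / m + 1 ≤ (2 * √u / m + 1) * exp (v / (2 * u)) := by
    calc 2 * √(u + v) / m + 1 ≤ 2 * (√u * exp (v / (2 * u))) / m + exp (v / (2 * u)) := by
          gcongr; exact sqrt_add_le_sqrt_mul_exp hu
      _ = (2 * √u / m + 1) * exp (v / (2 * u)) := by ring
  calc (2 * √(u + v) / m + 1) ^ n ≤ ((2 * √u / m + 1) * exp (v / (2 * u))) ^ n := by gcongr
    _ = (2 * √u / m + 1) ^ n * exp (n * v / (2 * u)) := by
      rw [mul_pow, ← exp_nat_mul, ← mul_div_assoc]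

theorem AddSubgroup.tsum_exp_neg_norm_sq_le {E : Type*} [NormedAddCommGroup E]
    [NormedSpace ℝ E] [FiniteDimensional ℝ E] [Nontrivial E] (L : AddSubgroup E)
    {m a c δ N₀ ρ : ℝ} (hm : 0 < m) (hL : ∀ x ∈ L, x ≠ 0 → m ≤ ‖x‖) (ha : 0 ≤ a) (hc : 0 < c)
    (hδ : 0 < δ) (hN₀ : (2 * √(a + δ) / m + 1) ^ finrank ℝ E ≤ N₀)
    (hρ : exp (finrank ℝ E * δ / (2 * (a + δ))) ≤ ρ) (hρq : ρ * exp (-(c * δ)) < 1) :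
    ∑' x : {x : E // x ∈ L ∧ a ≤ ‖x‖ ^ 2}, exp (-c * ‖(x : E)‖ ^ 2) ≤
      N₀ * (1 - exp (-(c * δ))) * exp (-(c * a)) / (1 - ρ * exp (-(c * δ))) := by
  refine tsum_exp_neg_le_of_card_le (T := {x : E // x ∈ L ∧ a ≤ ‖x‖ ^ 2}) (‖·.1‖ ^ 2) hc hδ
    ((exp_pos _).le.trans hρ) (fun x => x.2.2) (fun j F hF => ?_) hρq
  set d := finrank ℝ E
  have hs : 0 ≤ a + (j + 1) * δ := by positivity
  calc (#F : ℝ) = #(F.map (Function.Embedding.subtype _)) := by rw [card_map]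
    _ ≤ (2 * √(a + (j + 1) * δ) / m + 1) ^ d := by
        refine L.card_le_of_forall_norm_le hm (sqrt_nonneg _) hL _ fun x hx => ?_
        obtain ⟨y, hy, rfl⟩ := Finset.mem_map.1 hx
        exact ⟨y.2.1, (le_sqrt (norm_nonneg _) hs).2 (hF y hy).le⟩
    _ ≤ (2 * √(a + δ) / m + 1) ^ d * exp (d * (j * δ) / (2 * (a + δ))) := by
        rw [show a + (j + 1) * δ = (a + δ) + j * δ by ring]
        exact two_mul_sqrt_add_div_add_one_pow_le d (by positivity) (by positivity) hm.le
    _ ≤ N₀ * ρ ^ j := by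
        rw [show d * (j * δ) / (2 * (a + δ)) = j * (d * δ / (2 * (a + δ))) by ring,
          exp_nat_mul]
        gcongr
        exact le_trans (by positivity) hN₀

theorem exp_neg_le_inv_taylor {x t : ℝ} (n : ℕ) (ht : 0 ≤ t) (hx : n + t ≤ x) :
    exp (-x) ≤ (2.7182818283 ^ n * (1 + t + t ^ 2 / 2 + t ^ 3 / 6 + t ^ 4 / 24))⁻¹ := by
  have htaylor : 1 + t + t ^ 2 / 2 + t ^ 3 / 6 + t ^ 4 / 24 ≤ exp t := by
    have h := sum_le_exp_of_nonneg ht 5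
    simp only [sum_range_succ, sum_range_zero, Nat.factorial] at h
    norm_num at h
    linarith
  have he : (2.7182818283 : ℝ) ^ n ≤ exp n := by
    rw [← exp_one_pow]
    exact pow_le_pow_left₀ (by norm_num) exp_one_gt_d9.le n
  rw [exp_neg]
  refine inv_anti₀ (by positivity) ?_
  calc _ ≤ exp n * exp t := by gcongr
    _ = exp (n + t) := (exp_add _ _).symm
    _ ≤ exp x := exp_le_exp.2 hx

theorem two_mul_sqrt_div_sqrt_three_add_one_pow_le {s u : ℝ} (n : ℕ) (hu : 0 ≤ u)
    (hs : s ≤ u ^ 2) : (2 * √s / √3 + 1) ^ n ≤ (2 * u / 1.732 + 1) ^ n := by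
  have h3 : 1.732 ≤ √3 := (le_sqrt (by norm_num) (by norm_num)).2 (by norm_num)
  have hsu : √s ≤ u := (sqrt_le_left hu).2 hs
  gcongr

theorem mul_one_sub_mul_div_one_sub_le {N ρ q E D Q E' : ℝ} (hN : 0 ≤ N) (hρ : 0 ≤ ρ)
    (hq : q ≤ 1) (hE : 0 ≤ E) (hD : 1 - q ≤ D) (hQ : q ≤ Q) (hE' : E ≤ E')
    (hρQ : ρ * Q < 1) :
    N * (1 - q) * E / (1 - ρ * q) ≤ N * D * E' / (1 - ρ * Q) := by
  have hD0 : 0 ≤ D := by linarith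
  refine div_le_div₀ (mul_nonneg (mul_nonneg hN hD0) (hE.trans hE')) ?_ (by linarith) ?_
  · gcongr
  · linarith [mul_le_mul_of_nonneg_left hQ hρ]

local notation "ℝ³" => EuclideanSpace ℝ (Fin 3)

theorem tsum_exp_neg_norm_sq_lt_of_bounds (L : AddSubgroup ℝ³)
    (hL : ∀ x ∈ L, x ≠ 0 → (3 : ℝ) ≤ ‖x‖ ^ 2) {a c δ N₀ ρ Q D E B : ℝ} (ha : 0 ≤ a)
    (hc : 0 < c) (hδ : 0 < δ) (hN₀ : (2 * √(a + δ) / √3 + 1) ^ 3 ≤ N₀)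
    (hρ : exp (3 * δ / (2 * (a + δ))) ≤ ρ) (hQ : exp (-(c * δ)) ≤ Q)
    (hD : 1 - exp (-(c * δ)) ≤ D) (hE : exp (-(c * a)) ≤ E) (hρQ : ρ * Q < 1)
    (hB : N₀ * D * E / (1 - ρ * Q) < B) :
    ∑' x : {x : ℝ³ // x ∈ L ∧ a ≤ ‖x‖ ^ 2}, exp (-c * ‖(x : ℝ³)‖ ^ 2) < B := by
  have hL' : ∀ x ∈ L, x ≠ 0 → √3 ≤ ‖x‖ := fun x hx hx0 =>
    (sqrt_le_left (norm_nonneg x)).2 (hL x hx hx0)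
  have hρ0 : 0 ≤ ρ := (exp_pos _).le.trans hρ
  have hq1 : exp (-(c * δ)) ≤ 1 := exp_le_one_iff.2 (by nlinarith)
  calc _ ≤ N₀ * (1 - exp (-(c * δ))) * exp (-(c * a)) / (1 - ρ * exp (-(c * δ))) :=
        L.tsum_exp_neg_norm_sq_le (by positivity) hL' ha hc hδ
          (by rwa [finrank_euclideanSpace_fin])
          (by rwa [finrank_euclideanSpace_fin, Nat.cast_ofNat])
          ((mul_le_mul_of_nonneg_left hQ hρ0).trans_lt hρQ)
    _ ≤ N₀ * D * E / (1 - ρ * Q) :=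
        mul_one_sub_mul_div_one_sub_le (le_trans (by positivity) hN₀) hρ0 hq1 (exp_pos _).le
          hD hQ hE hρQ
    _ < B := hB

theorem tsum_exp_neg_pi_mul_norm_sq_lt (L : AddSubgroup ℝ³)
    (hL : ∀ x ∈ L, x ≠ 0 → (3 : ℝ) ≤ ‖x‖ ^ 2) :
    ∑' x : {x : ℝ³ // x ∈ L ∧ 3 * (2 : ℝ) ^ ((2 : ℝ) / 3) ≤ ‖x‖ ^ 2},
      exp (-π * ‖(x : ℝ³)‖ ^ 2) < 137.648 * 10 ^ (-(6 : ℤ)) := by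
  set t := (2 : ℝ) ^ ((2 : ℝ) / 3)
  have hcube : t ^ 3 = 4 := by
    rw [← rpow_natCast, ← rpow_mul (by norm_num)]
    norm_num
  have ht : 1.587 ≤ t ∧ t ≤ 1.588 :=
    ⟨le_of_pow_le_pow_left₀ three_ne_zero (by positivity) (by rw [hcube]; norm_num),
      le_of_pow_le_pow_left₀ three_ne_zero (by norm_num) (by rw [hcube]; norm_num)⟩
  have hρ : exp (3 * 1 / (2 * (3 * t + 1))) ≤ (1.36 : ℝ) := by
    have hy : 3 * 1 / (2 * (3 * t + 1)) ≤ 0.2604 := by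
      rw [div_le_iff₀ (by positivity)]
      linarith
    calc _ ≤ exp 0.2604 := exp_le_exp.2 hy
      _ ≤ 1 / (1 - 0.2604) := exp_bound_div_one_sub_of_interval (by norm_num) (by norm_num)
      _ ≤ 1.36 := by norm_num
  refine tsum_exp_neg_norm_sq_lt_of_bounds L hL (δ := 1) (N₀ := 54) (D := 1) (by positivity)
    pi_pos one_pos
    ((two_mul_sqrt_div_sqrt_three_add_one_pow_le (u := 2.4009) 3 (by norm_num)
      (by linarith)).trans (by norm_num)) hρ
    (exp_neg_le_inv_taylor 3 (t := 0.14) (by norm_num) (by linarith [pi_gt_d2]))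
    (by linarith [exp_pos (-(π * 1))])
    (exp_neg_le_inv_taylor 14 (t := 0.94) (by norm_num) (by nlinarith [pi_gt_d2]))
    (by norm_num) (by norm_num)

theorem tsum_exp_neg_pi_sub_half_mul_norm_sq_lt (L : AddSubgroup ℝ³)
    (hL : ∀ x ∈ L, x ≠ 0 → (3 : ℝ) ≤ ‖x‖ ^ 2) :
    ∑' x : {x : ℝ³ // x ∈ L ∧ (10 : ℝ) ≤ ‖x‖ ^ 2},
      exp (-(π - 1 / 2) * ‖(x : ℝ³)‖ ^ 2) < 0.001 * 10 ^ (-(6 : ℤ)) := by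
  refine tsum_exp_neg_norm_sq_lt_of_bounds L hL (δ := 1) (N₀ := 113) (ρ := 1.158) (D := 1)
    (by norm_num) (by linarith [pi_gt_three]) one_pos
    ((two_mul_sqrt_div_sqrt_three_add_one_pow_le (u := 3.3167) 3 (by norm_num)
      (by norm_num)).trans (by norm_num))
    ((exp_bound_div_one_sub_of_interval (by norm_num) (by norm_num)).trans (by norm_num))
    (exp_neg_le_inv_taylor 2 (t := 0.64) (by norm_num) (by linarith [pi_gt_d2]))
    (by linarith [exp_pos (-((π - 1 / 2) * 1))])
    (exp_neg_le_inv_taylor 26 (t := 0.41) (by norm_num) (by linarith [pi_gt_d6]))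
    (by norm_num) (by norm_num)

theorem tsum_exp_neg_1568075_mul_norm_sq_lt (L : AddSubgroup ℝ³)
    (hL : ∀ x ∈ L, x ≠ 0 → (3 : ℝ) ≤ ‖x‖ ^ 2) :
    ∑' x : {x : ℝ³ // x ∈ L ∧ (10 : ℝ) ≤ ‖x‖ ^ 2},
      exp (-1.568075 * ‖(x : ℝ³)‖ ^ 2) < 23.399 * 10 ^ (-(6 : ℤ)) := by
  refine tsum_exp_neg_norm_sq_lt_of_bounds L hL (δ := 0.1) (N₀ := 102) (ρ := 1.0151)
    (D := 1.568075 * 0.1) (by norm_num) (by norm_num) (by norm_num)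
    ((two_mul_sqrt_div_sqrt_three_add_one_pow_le (u := 3.17805) 3 (by norm_num)
      (by norm_num)).trans (by norm_num))
    ((exp_bound_div_one_sub_of_interval (by norm_num) (by norm_num)).trans (by norm_num))
    (exp_neg_le_inv_taylor 0 (t := 0.1568075) (by norm_num) (by norm_num))
    (by linarith [one_sub_le_exp_neg (1.568075 * 0.1 : ℝ)])
    (exp_neg_le_inv_taylor 15 (t := 0.68075) (by norm_num) (by norm_num))
    (by norm_num) (by norm_num)

/-- Tail bounds for theta-like series over a lattice `L ⊆ ℝ³` whose nonzero vectors `x`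
satisfy `‖x‖² ≥ 3`. -/
theorem lattice_sum_tail_estimates
    (L : AddSubgroup (EuclideanSpace ℝ (Fin 3)))
    (hL : ∀ x ∈ L, x ≠ 0 → (3 : ℝ) ≤ ‖x‖ ^ 2) :
    (∑' x : {x : EuclideanSpace ℝ (Fin 3) // x ∈ L ∧ 3 * (2 : ℝ) ^ ((2 : ℝ)/3) ≤ ‖x‖ ^ 2},
        Real.exp (-Real.pi * ‖(x : EuclideanSpace ℝ (Fin 3))‖ ^ 2) <
      137.648 * 10 ^ (-(6 : ℤ))) ∧
    (∑' x : {x : EuclideanSpace ℝ (Fin 3) // x ∈ L ∧ (10 : ℝ) ≤ ‖x‖ ^ 2},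
        Real.exp (-(Real.pi - 1/2) * ‖(x : EuclideanSpace ℝ (Fin 3))‖ ^ 2) <
      0.001 * 10 ^ (-(6 : ℤ))) ∧
    (∑' x : {x : EuclideanSpace ℝ (Fin 3) // x ∈ L ∧ (10 : ℝ) ≤ ‖x‖ ^ 2},
        Real.exp (-1.568075 * ‖(x : EuclideanSpace ℝ (Fin 3))‖ ^ 2) <
      23.399 * 10 ^ (-(6 : ℤ))) :=
  ⟨tsum_exp_neg_pi_mul_norm_sq_lt L hL, tsum_exp_neg_pi_sub_half_mul_norm_sq_lt L hL,
    tsum_exp_neg_1568075_mul_norm_sq_lt L hL⟩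
end

section
/- Let F be a cyclic cubic field and let u = (u₀,u₁,u₂) ∈ (ℝ_{>0})³ with N(u) = u₀u₁u₂ = 1. If f ∈ O_F is nonzero and ‖uf‖² < 3·2^{2/3}, then f is a unit of O_F. Consequently, for a degree-zero divisor (O_F, u) with N(u) = 1, the sum S₁ = ∑_{f ∈ O_F∖{0}, ‖uf‖² < 3·2^{2/3}} e^{−π‖uf‖²} runs only over units of O_F. -/
open NumberField
open scoped nonZeroDivisors

/-!
The three conjugates of `u f` multiply to `N(u) · N(f) = N(f)`, so by AM–GM
`‖uf‖² ≥ 3 |N(f)|^{2/3}`. A nonzero non-unit of `𝓞 F` has integral norm with `|N(f)| ≥ 2`,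
which forces `‖uf‖² ≥ 3 · 4^{1/3} = 3 · 2^{2/3}`.
-/

open Finset

theorem prod_univ_eq_prod_range_pow_orderOf {G M : Type*} [Group G] [Fintype G] [CommMonoid M]
    {g : G} (hg : ∀ x, x ∈ Subgroup.zpowers g) (φ : G → M) :
    ∏ x, φ x = ∏ i ∈ range (orderOf g), φ (g ^ i) := by
  classical
  rw [← IsCyclic.image_range_orderOf hg, prod_image]
  intro i hi j hj
  exact pow_injOn_Iio_orderOf (by simpa using hi) (by simpa using hj)

theorem Algebra.norm_eq_prod_pow_of_forall_mem_zpowers {K L : Type*} [Field K] [Field L]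
    [Algebra K L] [FiniteDimensional K L] [IsGalois K L]
    {σ : Gal(L/K)} (hσ : ∀ τ, τ ∈ Subgroup.zpowers σ) (x : L) :
    algebraMap K L (Algebra.norm K x) = ∏ i ∈ range (Module.finrank K L), (σ ^ i) x := by
  rw [Algebra.norm_eq_prod_automorphisms, prod_univ_eq_prod_range_pow_orderOf hσ,
    orderOf_eq_card_of_forall_mem_zpowers hσ, IsGalois.card_aut_eq_finrank]

theorem Algebra.norm_eq_mul_of_finrank_eq_three {K L : Type*} [Field K] [Field L]
    [Algebra K L] [FiniteDimensional K L] [IsGalois K L] (h3 : Module.finrank K L = 3)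
    {σ : Gal(L/K)} (hσ : ∀ τ, τ ∈ Subgroup.zpowers σ) (x : L) :
    algebraMap K L (Algebra.norm K x) = x * σ x * σ (σ x) := by
  simp [Algebra.norm_eq_prod_pow_of_forall_mem_zpowers hσ, h3, prod_range_succ]

theorem NumberField.two_le_abs_norm_of_not_isUnit {K : Type*} [Field K] [NumberField K]
    {x : 𝓞 K} (hx0 : x ≠ 0) (hx : ¬IsUnit x) : 2 ≤ |Algebra.norm ℤ x| := by
  have hn0 : Algebra.norm ℤ x ≠ 0 := Algebra.norm_ne_zero_iff.mpr hx0
  have hn1 : |Algebra.norm ℤ x| ≠ 1 := by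
    refine fun h ↦ hx (NumberField.isUnit_iff_norm.mpr ?_)
    rw [RingOfIntegers.coe_norm, ← Algebra.coe_norm_int]
    exact_mod_cast h
  have := Int.one_le_abs hn0
  omega

theorem three_mul_rpow_sq_le_sq_add_sq_add_sq (a b c : ℝ) :
    3 * ((a * b * c) ^ 2) ^ (1 / 3 : ℝ) ≤ a ^ 2 + b ^ 2 + c ^ 2 := by
  have hamgm := Real.geom_mean_le_arith_mean3_weighted (w₁ := 1 / 3) (w₂ := 1 / 3) (w₃ := 1 / 3)
    (by norm_num) (by norm_num) (by norm_num) (sq_nonneg a) (sq_nonneg b) (sq_nonneg c)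
    (by norm_num)
  rw [← Real.mul_rpow (by positivity) (by positivity),
    ← Real.mul_rpow (by positivity) (by positivity)] at hamgm
  rw [mul_pow, mul_pow]
  linarith

theorem three_mul_rpow_sq_norm_le_unorm2 {F : Type*} [Field F] [NumberField F] [IsGalois ℚ F]
    (h3 : Module.finrank ℚ F = 3) {σ : F ≃ₐ[ℚ] F} (hσ : ∀ τ, τ ∈ Subgroup.zpowers σ)
    (ι : F →+* ℝ) {u : Fin 3 → ℝ} (hN : u 0 * u 1 * u 2 = 1) (f : F) :
    3 * (((Algebra.norm ℚ f : ℚ) : ℝ) ^ 2) ^ (1 / 3 : ℝ) ≤ unorm2 σ ι u f := by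
  have hnorm : ((Algebra.norm ℚ f : ℚ) : ℝ) = ι f * ι (σ f) * ι (σ (σ f)) := by
    simpa using congrArg ι (Algebra.norm_eq_mul_of_finrank_eq_three h3 hσ f)
  have key := three_mul_rpow_sq_le_sq_add_sq_add_sq (u 0 * ι f) (u 1 * ι (σ f)) (u 2 * ι (σ (σ f)))
  calc 3 * (((Algebra.norm ℚ f : ℚ) : ℝ) ^ 2) ^ (1 / 3 : ℝ)
      = 3 * (((u 0 * ι f) * (u 1 * ι (σ f)) * (u 2 * ι (σ (σ f)))) ^ 2) ^ (1 / 3 : ℝ) := by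
        rw [hnorm, show (u 0 * ι f) * (u 1 * ι (σ f)) * (u 2 * ι (σ (σ f)))
          = (u 0 * u 1 * u 2) * (ι f * ι (σ f) * ι (σ (σ f))) by ring, hN, one_mul]
    _ ≤ unorm2 σ ι u f := by rw [unorm2]; linarith

theorem isUnit_of_short_vector_general
    {F : Type*} [Field F] [NumberField F] [IsGalois ℚ F]
    (h3 : Module.finrank ℚ F = 3)
    (σ : F ≃ₐ[ℚ] F) (hσ : ∀ τ : F ≃ₐ[ℚ] F, τ ∈ Subgroup.zpowers σ)
    (ι : F →+* ℝ)
    (u : Fin 3 → ℝ) (hN : u 0 * u 1 * u 2 = 1)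
    (f : 𝓞 F) (hf : f ≠ 0)
    (hshort : unorm2 σ ι u (f : F) < 3 * (2 : ℝ) ^ ((2 : ℝ)/3)) :
    IsUnit f := by
  by_contra hunit
  have hnorm : (4 : ℝ) ≤ ((Algebra.norm ℚ (f : F) : ℚ) : ℝ) ^ 2 := by
    have h2 : (2 : ℝ) ≤ |((Algebra.norm ℤ f : ℤ) : ℝ)| := by
      exact_mod_cast NumberField.two_le_abs_norm_of_not_isUnit hf hunit
    rw [← Algebra.coe_norm_int, Rat.cast_intCast, ← sq_abs]
    nlinarith
  have hcbrt : (2 : ℝ) ^ ((2 : ℝ) / 3) = (4 : ℝ) ^ (1 / 3 : ℝ) := by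
    rw [show (4 : ℝ) = 2 ^ (2 : ℝ) by norm_num, ← Real.rpow_mul (by norm_num)]
    norm_num
  have hlow : 3 * (2 : ℝ) ^ ((2 : ℝ) / 3) ≤ unorm2 σ ι u (f : F) := by
    rw [hcbrt]
    refine le_trans ?_ (three_mul_rpow_sq_norm_le_unorm2 h3 hσ ι hN (f : F))
    gcongr
  exact hlow.not_gt hshort

/-- If `N(u) = 1` and `f ∈ O_F` is nonzero with `‖uf‖² < 3·2^{2/3}`, then `f` is a
unit of `O_F`. -/
theorem isUnit_of_short_vector
    {F : Type*} [Field F] [NumberField F] [IsGalois ℚ F]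
    (h3 : Module.finrank ℚ F = 3)
    (σ : F ≃ₐ[ℚ] F) (hσ : ∀ τ : F ≃ₐ[ℚ] F, τ ∈ Subgroup.zpowers σ)
    (ι : F →+* ℝ)
    (u : Fin 3 → ℝ) (hu : ∀ i, 0 < u i) (hN : u 0 * u 1 * u 2 = 1)
    (f : 𝓞 F) (hf : f ≠ 0)
    (hshort : unorm2 σ ι u (f : F) < 3 * (2 : ℝ) ^ ((2 : ℝ)/3)) :
    IsUnit f :=
  isUnit_of_short_vector_general h3 σ hσ ι u hN f hf hshort
end

section
/- Let F be a cyclic cubic field with Galois group generated by σ. For every u = (u₀,u₁,u₂) ∈ (ℝ_{>0})³, one has the identity 3·( k⁰(O_F,u) − k⁰(O_F,(1,1,1)) ) = ∑_{f ∈ O_F} e^{−π‖f‖²} G₂(u,f), where G₂(u,f) = G₁(u,f) + G₁(u,σ(f)) + G₁(u,σ²(f)) and G₁(u,f) = exp(−π(‖uf‖² − ‖f‖²)) − 1. Consequently, for u ≠ (1,1,1), the inequality k⁰(O_F,u) < k⁰(O_F,(1,1,1)) is equivalent to ∑_{f ∈ O_F} e^{−π‖f‖²} G₂(u,f) < 0.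 -/
open NumberField
open scoped nonZeroDivisors

/-- `G₁(u,f) = exp(−π(‖uf‖² − ‖f‖²)) − 1`. -/
noncomputable def G1 {F : Type*} [Field F] [Algebra ℚ F] (σ : F ≃ₐ[ℚ] F) (ι : F →+* ℝ)
    (u : Fin 3 → ℝ) (f : F) : ℝ :=
  Real.exp (-Real.pi * (unorm2 σ ι u f - fnorm2 σ ι f)) - 1

/-- `G₂(u,f) = G₁(u,f) + G₁(u,σf) + G₁(u,σ²f)`. -/
noncomputable def G2 {F : Type*} [Field F] [Algebra ℚ F] (σ : F ≃ₐ[ℚ] F) (ι : F →+* ℝ)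
    (u : Fin 3 → ℝ) (f : F) : ℝ :=
  G1 σ ι u f + G1 σ ι u (σ f) + G1 σ ι u (σ (σ f))

/-!
Since `σ³ = 1`, `‖σ f‖ = ‖f‖`, so `e^{-π‖f‖²} G₁(u, σᵏ f) = e^{-π‖u σᵏ f‖²} - e^{-π‖σᵏ f‖²}`.
As `σ` permutes `O_F`, each of the three terms `k = 0, 1, 2` sums to `k⁰(O_F,u) - k⁰(O_F,1)`.
The rearrangement is legitimate because both theta series converge: the embeddings `ι ∘ σᵏ` are
distinct, so by Dedekind's independence of characters `f ↦ (uₖ ι(σᵏ f))ₖ` maps `O_F` injectively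
onto a lattice in `ℝ³`, and Gaussian sums over a lattice converge by comparison with `∑ ‖x‖⁻ⁿ`.
-/

open Module Real Nat Filter

lemma exp_neg_mul_sq_le_zpow {c t : ℝ} (hc : 0 < c) (ht : 0 < t) (n : ℕ) :
    exp (-c * t ^ 2) ≤ n ! / c ^ n * t ^ (-(2 * n : ℤ)) := by
  have h := pow_div_factorial_le_exp (x := c * t ^ 2) (by positivity) n
  calc exp (-c * t ^ 2) = (exp (c * t ^ 2))⁻¹ := by rw [neg_mul, exp_neg]
    _ ≤ ((c * t ^ 2) ^ n / n !)⁻¹ := inv_anti₀ (by positivity) h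
    _ = n ! / c ^ n * t ^ (-(2 * n : ℤ)) := by
      rw [zpow_neg, zpow_mul, zpow_natCast, mul_pow]; norm_cast; field_simp

theorem ZLattice.summable_exp_neg_mul_norm_sq {E : Type*} [NormedAddCommGroup E]
    [NormedSpace ℝ E] [FiniteDimensional ℝ E] (L : Submodule ℤ E) [DiscreteTopology L]
    {c : ℝ} (hc : 0 < c) : Summable fun x : L => exp (-c * ‖x‖ ^ 2) := by
  set n := finrank ℤ L + 1
  refine Summable.of_norm_bounded_eventually
    ((summable_norm_zpow L (-(2 * n : ℕ) : ℤ) (by omega)).mul_left (n ! / c ^ n)) ?_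
  filter_upwards [eventually_cofinite_ne 0] with x hx
  rw [norm_of_nonneg (exp_pos _).le]
  exact_mod_cast exp_neg_mul_sq_le_zpow hc (norm_pos_iff.2 hx) n

theorem pi_norm_sq_le_sum_sq {ι : Type*} [Fintype ι] (x : ι → ℝ) : ‖x‖ ^ 2 ≤ ∑ i, x i ^ 2 := by
  have h : ‖x‖ ≤ √(∑ i, x i ^ 2) := (pi_norm_le_iff_of_nonneg (by positivity)).2 fun i =>
    Real.abs_le_sqrt (Finset.single_le_sum (f := fun i => x i ^ 2) (fun _ _ => sq_nonneg _)
      (Finset.mem_univ i))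
  calc ‖x‖ ^ 2 ≤ √(∑ i, x i ^ 2) ^ 2 := by gcongr
    _ = ∑ i, x i ^ 2 := Real.sq_sqrt (by positivity)

theorem isUnit_ringHom_apply_basis {F : Type*} [Field F] [Algebra ℚ F] {κ : Type*}
    [Fintype κ] [DecidableEq κ] {ψ : κ → F →+* ℝ} (hψ : Function.Injective ψ)
    (b : Basis κ ℚ F) : IsUnit (Matrix.of fun i j => ψ i (b j)) := by
  rw [← Matrix.linearIndependent_rows_iff_isUnit, Fintype.linearIndependent_iff]
  intro c hc
  let Λ : F →ₗ[ℚ] ℝ := ∑ i, c i • (ψ i).toRatAlgHom.toLinearMap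
  have hΛ : Λ = 0 := b.ext fun j => by
    simpa [Λ, Matrix.row] using congr_fun hc j
  have hdedekind := (linearIndependent_monoidHom F ℝ).comp (fun i => (ψ i : F →* ℝ))
    fun i j h => hψ (RingHom.ext fun x => DFunLike.congr_fun h x)
  refine Fintype.linearIndependent_iff.1 hdedekind c (funext fun x => ?_)
  simpa [Λ] using LinearMap.congr_fun hΛ x

theorem linearIndependent_mul_ringHom_apply_basis {F : Type*} [Field F] [Algebra ℚ F]
    {κ : Type*} [Fintype κ] [DecidableEq κ] {ψ : κ → F →+* ℝ} (hψ : Function.Injective ψ)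
    {w : κ → ℝ} (hw : ∀ i, w i ≠ 0) (b : Basis κ ℚ F) :
    LinearIndependent ℝ fun j i => w i * ψ i (b j) := by
  have hA := (Matrix.isUnit_diagonal.2 (Pi.isUnit_iff.2 fun i => (hw i).isUnit)).mul
    (isUnit_ringHom_apply_basis hψ b)
  have hcol : (Matrix.diagonal w * Matrix.of fun i j => ψ i (b j)).col =
      fun j i => w i * ψ i (b j) := by
    ext j i
    simp [Matrix.col, Matrix.diagonal_mul]
  rwa [← Matrix.linearIndependent_cols_iff_isUnit, hcol] at hA

theorem NumberField.summable_exp_neg_mul_sum_sq {F : Type*} [Field F] [NumberField F]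
    {κ : Type*} [Fintype κ] {ψ : κ → F →+* ℝ} (hψ : Function.Injective ψ)
    (hκ : Fintype.card κ = finrank ℚ F) {w : κ → ℝ} (hw : ∀ i, w i ≠ 0) {c : ℝ} (hc : 0 < c) :
    Summable fun x : 𝓞 F => exp (-c * ∑ i, (w i * ψ i x) ^ 2) := by
  classical
  let e : Free.ChooseBasisIndex ℤ (𝓞 F) ≃ κ := Fintype.equivOfCardEq <| by
    rw [hκ, ← RingOfIntegers.rank, finrank_eq_card_chooseBasisIndex]
  let Φ : 𝓞 F →ₗ[ℤ] κ → ℝ := (AddMonoidHom.pi fun i => (AddMonoidHom.mulLeft (w i)).comp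
    ((ψ i).comp (algebraMap (𝓞 F) F)).toAddMonoidHom).toIntLinearMap
  have hΦ : ∀ x i, Φ x i = w i * ψ i x := fun _ _ => rfl
  have hli : LinearIndependent ℝ (Φ ∘ (RingOfIntegers.basis F).reindex e) := by
    have hcols : Φ ∘ (RingOfIntegers.basis F).reindex e =
        fun j i => w i * ψ i ((integralBasis F).reindex e j) := by
      ext j i
      simp [hΦ, integralBasis_apply]
    rw [hcols]
    exact linearIndependent_mul_ringHom_apply_basis hψ hw ((integralBasis F).reindex e)
  have hrange : LinearMap.range Φ = Submodule.span ℤ (Set.range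
      (basisOfLinearIndependentOfCardEqFinrank' _ hli (by simp))) := by
    rw [coe_basisOfLinearIndependentOfCardEqFinrank', Set.range_comp, ← Submodule.map_span,
      Basis.span_eq, LinearMap.range_eq_map]
  have : DiscreteTopology (LinearMap.range Φ) := by rw [hrange]; infer_instance
  have hne : Nonempty κ := Fintype.card_pos_iff.1 (hκ ▸ finrank_pos)
  have hinj : Function.Injective Φ := fun x y h => by
    obtain ⟨i⟩ := hne
    have := congr_fun h i
    simp only [hΦ, mul_right_inj' (hw i)] at this
    exact RingOfIntegers.coe_injective ((ψ i).injective this)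
  refine ((ZLattice.summable_exp_neg_mul_norm_sq _ hc).comp_injective
    (i := LinearMap.rangeRestrict Φ) ?_).of_nonneg_of_le (fun _ => (exp_pos _).le) fun x => ?_
  · exact (LinearMap.injective_rangeRestrict_iff Φ).2 hinj
  · change _ ≤ exp (-c * ‖Φ x‖ ^ 2)
    simpa only [Function.comp_apply, exp_le_exp, neg_mul, neg_le_neg_iff, hΦ] using
      mul_le_mul_of_nonneg_left (pi_norm_sq_le_sum_sq (Φ x)) hc.le

section CyclicCubic

variable {F : Type*} [Field F] [Algebra ℚ F] (σ : F ≃ₐ[ℚ] F) (ι : F →+* ℝ)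

def conjugateEmbedding (n : ℕ) : F →+* ℝ := ι.comp ((σ ^ n : F ≃ₐ[ℚ] F) : F →+* F)

theorem unorm2_eq_sum (u : Fin 3 → ℝ) (f : F) :
    unorm2 σ ι u f = ∑ i : Fin 3, (u i * conjugateEmbedding σ ι i f) ^ 2 := by
  simp [unorm2, conjugateEmbedding, Fin.sum_univ_three, mul_pow]

theorem injective_conjugateEmbedding (hσ : orderOf σ = 3) :
    Function.Injective fun i : Fin 3 => conjugateEmbedding σ ι i := fun i j h => by
  have hpow : σ ^ (i : ℕ) = σ ^ (j : ℕ) :=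
    AlgEquiv.ext fun f => ι.injective (RingHom.congr_fun h f)
  exact Fin.ext (pow_injOn_Iio_orderOf (by simp [hσ]) (by simp [hσ]) hpow)

theorem unorm2_one (f : F) : unorm2 σ ι 1 f = fnorm2 σ ι f := by
  simp [unorm2, fnorm2]

theorem fnorm2_map (hσ : ∀ f, σ (σ (σ f)) = f) (f : F) : fnorm2 σ ι (σ f) = fnorm2 σ ι f := by
  simp only [fnorm2, hσ]
  ring

theorem exp_neg_pi_fnorm2_mul_G1 (u : Fin 3 → ℝ) (f : F) :
    exp (-π * fnorm2 σ ι f) * G1 σ ι u f =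
      exp (-π * unorm2 σ ι u f) - exp (-π * unorm2 σ ι 1 f) := by
  rw [G1, mul_sub, mul_one, ← exp_add, unorm2_one]
  congr 2
  ring

theorem exp_neg_pi_fnorm2_mul_G2 (hσ : ∀ f, σ (σ (σ f)) = f) (u : Fin 3 → ℝ) (f : F) :
    exp (-π * fnorm2 σ ι f) * G2 σ ι u f =
      (exp (-π * unorm2 σ ι u f) - exp (-π * unorm2 σ ι 1 f)) +
      (exp (-π * unorm2 σ ι u (σ f)) - exp (-π * unorm2 σ ι 1 (σ f))) +
      (exp (-π * unorm2 σ ι u (σ (σ f))) - exp (-π * unorm2 σ ι 1 (σ (σ f)))) := by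
  have h1 := fnorm2_map σ ι hσ f
  have h2 := fnorm2_map σ ι hσ (σ f)
  rw [G2, mul_add, mul_add, ← exp_neg_pi_fnorm2_mul_G1, ← exp_neg_pi_fnorm2_mul_G1,
    ← exp_neg_pi_fnorm2_mul_G1, h2, h1]

end CyclicCubic

section CyclicCubicField

variable {F : Type*} [Field F] [NumberField F] (σ : F ≃ₐ[ℚ] F) (ι : F →+* ℝ)

theorem hasSum_range_algebraMap_comp_iff {g : F → ℝ} {a : ℝ} :
    HasSum (fun x : Set.range (algebraMap (𝓞 F) F) => g (σ x)) a ↔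
      HasSum (fun x : Set.range (algebraMap (𝓞 F) F) => g x) a := by
  have hmem : ∀ y : F, y ∈ Set.range (algebraMap (𝓞 F) F) ↔ IsIntegral ℤ y :=
    fun _ => IsIntegralClosure.isIntegral_iff.symm
  let e : Set.range (algebraMap (𝓞 F) F) ≃ Set.range (algebraMap (𝓞 F) F) :=
    σ.toEquiv.subtypeEquiv fun x => by
      rw [hmem, hmem]; exact (isIntegral_algEquiv (σ.restrictScalars ℤ)).symm
  exact e.hasSum_iff (f := fun x : Set.range (algebraMap (𝓞 F) F) => g x)

theorem summable_exp_neg_pi_unorm2 (h3 : finrank ℚ F = 3) (hσ : orderOf σ = 3)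
    {u : Fin 3 → ℝ} (hu : ∀ i, 0 < u i) :
    Summable fun f : Set.range (algebraMap (𝓞 F) F) => exp (-π * unorm2 σ ι u f) := by
  refine (Equiv.ofInjective _ RingOfIntegers.coe_injective).summable_iff.1 ?_
  simpa [Function.comp_def, unorm2_eq_sum] using NumberField.summable_exp_neg_mul_sum_sq
    (injective_conjugateEmbedding σ ι hσ) (by simp [h3]) (fun i => (hu i).ne') pi_pos

end CyclicCubicField

/-- The fundamental identity `3(k⁰(O_F,u) − k⁰(O_F,1)) = ∑_{f∈O_F} e^{−π‖f‖²} G₂(u,f)`,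
and the resulting equivalence for `u ≠ (1,1,1)`. -/
theorem k0_diff_eq_G2_sum
    {F : Type*} [Field F] [NumberField F] [IsGalois ℚ F]
    (h3 : Module.finrank ℚ F = 3)
    (σ : F ≃ₐ[ℚ] F) (hσ : ∀ τ : F ≃ₐ[ℚ] F, τ ∈ Subgroup.zpowers σ)
    (ι : F →+* ℝ)
    (u : Fin 3 → ℝ) (hu : ∀ i, 0 < u i) :
    3 * (k0 σ ι (Set.range (algebraMap (𝓞 F) F)) u -
        k0 σ ι (Set.range (algebraMap (𝓞 F) F)) 1) =
      (∑' f : Set.range (algebraMap (𝓞 F) F),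
        Real.exp (-Real.pi * fnorm2 σ ι (f : F)) * G2 σ ι u (f : F)) ∧
    (u ≠ 1 →
      (k0 σ ι (Set.range (algebraMap (𝓞 F) F)) u <
          k0 σ ι (Set.range (algebraMap (𝓞 F) F)) 1 ↔
        (∑' f : Set.range (algebraMap (𝓞 F) F),
          Real.exp (-Real.pi * fnorm2 σ ι (f : F)) * G2 σ ι u (f : F)) < 0)) := by
  have hord : orderOf σ = 3 := by
    rw [orderOf_eq_card_of_forall_mem_zpowers hσ, IsGalois.card_aut_eq_finrank, h3]
  have hσ3 : ∀ f, σ (σ (σ f)) = f := fun f => by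
    have h := AlgEquiv.ext_iff.1 (hord ▸ pow_orderOf_eq_one σ) f
    rwa [pow_succ, pow_two, AlgEquiv.mul_apply, AlgEquiv.mul_apply] at h
  set S := Set.range (algebraMap (𝓞 F) F)
  let D : F → ℝ := fun f => exp (-π * unorm2 σ ι u f) - exp (-π * unorm2 σ ι 1 f)
  have hD : HasSum (fun f : S => D f) (k0 σ ι S u - k0 σ ι S 1) :=
    (summable_exp_neg_pi_unorm2 σ ι h3 hord hu).hasSum.sub
      (summable_exp_neg_pi_unorm2 σ ι h3 hord fun _ => one_pos).hasSum
  have hDσ := (hasSum_range_algebraMap_comp_iff σ (g := D)).2 hD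
  have hDσσ := (hasSum_range_algebraMap_comp_iff σ (g := fun f => D (σ f))).2 hDσ
  have hG2 : HasSum (fun f : S => exp (-π * fnorm2 σ ι f) * G2 σ ι u f)
      (3 * (k0 σ ι S u - k0 σ ι S 1)) := by
    simp only [exp_neg_pi_fnorm2_mul_G2 σ ι hσ3]
    convert (hD.add hDσ).add hDσσ using 1
    ring
  refine ⟨hG2.tsum_eq.symm, fun _ => ?_⟩
  rw [hG2.tsum_eq]
  constructor <;> intro h <;> linarith
end

section
/- Let F be a cyclic cubic field and let u = (e^x, e^y, e^z) with x + y + z = 0 and ‖w‖² = x² + y² + z² > 0, where w = (−x,−y,−z). Then for every f ∈ O_F one has G(u,f) ≤ 4π²‖f²‖² e^{−π‖f‖²} (1 + (1/2)e^{2π‖w‖·‖f²‖}), where ‖f²‖² = f₀⁴ + f₁⁴ + f₂⁴. In particular, if f ∈ O_F satisfies ‖f‖² ≥ 9, then G(u,f) ≤ 4π² ( e^{−(π − 1/2)‖f‖²} + (1/2) e^{−π(1 − 2‖w‖ − 1/(2π))‖f‖²} ). -/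
open NumberField
open scoped nonZeroDivisors

/-- For `u = (e^x, e^y, e^z)` and `w = (−x,−y,−z)`,
`G(u,f) = e^{−π‖f‖²} G₂(u,f) / ‖w‖²`. -/
noncomputable def Gfun {F : Type*} [Field F] [Algebra ℚ F] (σ : F ≃ₐ[ℚ] F) (ι : F →+* ℝ)
    (x y z : ℝ) (f : F) : ℝ :=
  Real.exp (-Real.pi * fnorm2 σ ι f) *
    G2 σ ι ![Real.exp x, Real.exp y, Real.exp z] f / (x ^ 2 + y ^ 2 + z ^ 2)

/-!
Write `sⱼ = fⱼ²` and `aⱼ = e^{2xⱼ} - 1` (indices in `ℤ/3`). Then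
`G₂(u,f) = ∑ₖ (e^{-π Dₖ} - 1)` with the cyclic convolutions `Dₖ = ∑ⱼ aⱼ s_{j+k}`.
Since `aⱼ ≥ 2xⱼ` and `∑ xⱼ = 0`, we get `∑ₖ Dₖ ≥ 0`, and Cauchy–Schwarz gives
`-π Dₖ ≤ 2v` with `v = π‖w‖‖f²‖`.

If `v ≥ 1`, some `Dₖ` is nonnegative and each of the other two terms is at most
`e^{2v} - 1 ≤ v² e^{2v}`. If `v ≤ 1`, the Taylor bound `e^t - 1 - t ≤ t²/2 · e^{max t 0}`
together with `∑ₖ Dₖ ≥ 0` reduces everything to `∑ₖ Dₖ² ≤ 5‖w‖²‖f²‖²`. This follows from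
`∑ₖ Dₖ² = (∑ aⱼ²)(∑ sⱼ² - C) + (∑ aⱼ)² C` with `C = ∑ sⱼ s_{j+1}`, from `aⱼ ≈ 2xⱼ`
(here `‖w‖` is small), and from `C ≥ 3`, which is AM–GM applied to `s₀s₁s₂ = N(f)² ≥ 1`.

The second estimate follows from the first, because `‖f²‖² ≤ ‖f‖⁴ ≤ e^{‖f‖²/2}` once `‖f‖² ≥ 9`.
-/

open Real Finset

namespace Real

lemma exp_sub_one_sub_le_of_nonpos {t : ℝ} (ht : t ≤ 0) : exp t - 1 - t ≤ t ^ 2 / 2 := by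
  have hq := quadratic_le_exp_of_nonneg (neg_nonneg.2 ht)
  have hinv : exp t * exp (-t) = 1 := by rw [← exp_add, add_neg_cancel, exp_zero]
  -- `(1 + t + t²/2)(1 - t + t²/2) = 1 + t⁴/4 ≥ 1`
  nlinarith [mul_le_mul_of_nonneg_left hq (exp_pos t).le, sq_nonneg (t ^ 2), exp_pos t]

lemma exp_sub_one_sub_le_mul_exp_of_nonneg {t : ℝ} (ht : 0 ≤ t) :
    exp t - 1 - t ≤ t ^ 2 / 2 * exp t := by
  rcases le_or_gt (t ^ 2) 2 with hsmall | hlarge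
  · have hpade := exp_le_two_add_div_two_sub ht (by nlinarith)
    rw [le_div_iff₀ (by nlinarith)] at hpade
    nlinarith [mul_le_mul_of_nonneg_right hpade (by linarith : (0 : ℝ) ≤ 2 - t ^ 2)]
  · nlinarith [exp_pos t]

lemma exp_sub_one_sub_le_mul_exp {t m : ℝ} (hm : 0 ≤ m) (htm : t ≤ m) :
    exp t - 1 - t ≤ t ^ 2 / 2 * exp m := by
  rcases le_total t 0 with ht | ht
  · nlinarith [exp_sub_one_sub_le_of_nonpos ht, one_le_exp hm, sq_nonneg t]
  · nlinarith [exp_sub_one_sub_le_mul_exp_of_nonneg ht, exp_le_exp.2 htm, sq_nonneg t]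

lemma abs_exp_sub_one_le_abs_add_sq {t : ℝ} (ht : |t| ≤ 1) : |exp t - 1| ≤ |t| + t ^ 2 := by
  calc |exp t - 1| = |(exp t - 1 - t) + t| := by ring_nf
    _ ≤ |exp t - 1 - t| + |t| := abs_add_le _ _
    _ ≤ |t| + t ^ 2 := by linarith [abs_exp_sub_one_sub_id_le ht]

lemma exp_two_mul_sub_one_le {t : ℝ} (ht : |t| ≤ 1 / 2) : exp (2 * t) - 1 ≤ 2 * t + 4 * t ^ 2 := by
  have h := abs_exp_sub_one_sub_id_le (x := 2 * t) (by rw [abs_mul, abs_two]; linarith)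
  rw [abs_le] at h
  linarith [h.2]

lemma sq_exp_two_mul_sub_one_le {t R : ℝ} (htR : |t| ≤ R) (hR : R ≤ 1 / 2) :
    (exp (2 * t) - 1) ^ 2 ≤ 4 * (1 + 2 * R) ^ 2 * t ^ 2 := by
  have h := abs_exp_sub_one_le_abs_add_sq (t := 2 * t) (by rw [abs_mul, abs_two]; linarith)
  rw [abs_mul, abs_two, mul_pow, ← sq_abs t] at h
  have h' : |exp (2 * t) - 1| ≤ 2 * (1 + 2 * R) * |t| := by nlinarith [abs_nonneg t]
  rw [← sq_abs (exp (2 * t) - 1), ← sq_abs t]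
  nlinarith [pow_le_pow_left₀ (abs_nonneg _) h' 2]

lemma exp_two_le_eight : exp 2 ≤ 8 := by
  have h : exp 2 = exp 1 ^ 2 := by rw [← exp_nat_mul]; norm_num
  nlinarith [exp_one_lt_d9, exp_pos 1]

lemma le_exp_div_four {N : ℝ} (hN : 9 ≤ N) : N ≤ exp (N / 4) := by
  have h9 : 9 ≤ exp (9 / 4) := by
    refine le_trans ?_ (sum_le_exp_of_nonneg (by norm_num : (0 : ℝ) ≤ 9 / 4) 6)
    norm_num [Finset.sum_range_succ, Nat.factorial]
  have hsplit : exp (N / 4) = exp (9 / 4) * exp ((N - 9) / 4) := by rw [← exp_add]; ring_nf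
  rw [hsplit]
  nlinarith [add_one_le_exp ((N - 9) / 4), exp_pos ((N - 9) / 4)]

lemma two_mul_le_exp_two_mul_sub_one (t : ℝ) : 2 * t ≤ exp (2 * t) - 1 := by
  linarith [add_one_le_exp (2 * t)]

lemma sq_le_exp_div_two {N : ℝ} (hN : 9 ≤ N) : N ^ 2 ≤ exp (N / 2) := by
  calc N ^ 2 ≤ exp (N / 4) ^ 2 := pow_le_pow_left₀ (by linarith) (le_exp_div_four hN) 2
    _ = exp (N / 2) := by rw [← exp_nat_mul]; ring_nf

end Real

section ExpSums

variable {ι : Type*} {s : Finset ι} {T : ι → ℝ} {m : ℝ}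

lemma sum_exp_sub_one_le_mul_sum_sq (hm : 0 ≤ m) (hT : ∀ i ∈ s, T i ≤ m)
    (hsum : ∑ i ∈ s, T i ≤ 0) :
    ∑ i ∈ s, (exp (T i) - 1) ≤ exp m / 2 * ∑ i ∈ s, T i ^ 2 := by
  have hterm : ∀ i ∈ s, exp (T i) - 1 ≤ T i + exp m / 2 * T i ^ 2 := fun i hi => by
    nlinarith [exp_sub_one_sub_le_mul_exp hm (hT i hi)]
  calc ∑ i ∈ s, (exp (T i) - 1) ≤ ∑ i ∈ s, (T i + exp m / 2 * T i ^ 2) := sum_le_sum hterm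
    _ ≤ exp m / 2 * ∑ i ∈ s, T i ^ 2 := by rw [sum_add_distrib, ← mul_sum]; linarith

lemma sum_exp_sub_one_le_card_sub_one_mul (hs : s.Nonempty) (hT : ∀ i ∈ s, T i ≤ m)
    (hsum : ∑ i ∈ s, T i ≤ 0) :
    ∑ i ∈ s, (exp (T i) - 1) ≤ (#s - 1) * (exp m - 1) := by
  classical
  obtain ⟨k, hk, hTk⟩ : ∃ k ∈ s, T k ≤ 0 :=
    exists_le_of_sum_le hs (by simpa using hsum)
  have hrest : ∑ i ∈ s.erase k, (exp (T i) - 1) ≤ #(s.erase k) • (exp m - 1) :=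
    sum_le_card_nsmul _ _ _ fun i hi => by
      linarith [exp_le_exp.2 (hT i (mem_of_mem_erase hi))]
  rw [← add_sum_erase s _ hk]
  rw [card_erase_of_mem hk, nsmul_eq_mul, Nat.cast_pred (card_pos.2 hs)] at hrest
  linarith [exp_le_one_iff.2 hTk]

end ExpSums

section ShiftedSums

variable {G : Type*} [AddGroup G] [Fintype G]

lemma sum_comp_add_right {M : Type*} [AddCommMonoid M] (s : G → M) (k : G) :
    ∑ j, s (j + k) = ∑ j, s j :=
  Equiv.sum_comp (Equiv.addRight k) s

lemma sum_comp_add_left {M : Type*} [AddCommMonoid M] (s : G → M) (k : G) :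
    ∑ j, s (k + j) = ∑ j, s j :=
  Equiv.sum_comp (Equiv.addLeft k) s

lemma sum_sum_mul_add (a s : G → ℝ) :
    ∑ k, ∑ j, a j * s (j + k) = (∑ j, a j) * ∑ j, s j := by
  rw [Finset.sum_comm, Finset.sum_mul]
  refine Finset.sum_congr rfl fun j _ => ?_
  rw [← Finset.mul_sum, sum_comp_add_left]

lemma neg_sqrt_mul_sqrt_le_sum_mul_add (x s : G → ℝ) (k : G) :
    -(√(∑ j, x j ^ 2) * √(∑ j, s j ^ 2)) ≤ ∑ j, x j * s (j + k) := by
  have h := Real.sum_mul_le_sqrt_mul_sqrt Finset.univ (fun j => -x j) (fun j => s (j + k))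
  simp only [neg_sq, neg_mul, Finset.sum_neg_distrib] at h
  rw [sum_comp_add_right (fun j => s j ^ 2)] at h
  linarith

lemma sum_mul_add_le_sum_sq (s : G → ℝ) (k : G) : ∑ j, s j * s (j + k) ≤ ∑ j, s j ^ 2 := by
  have h := Real.sum_mul_le_sqrt_mul_sqrt Finset.univ s (fun j => s (j + k))
  rw [sum_comp_add_right (fun j => s j ^ 2),
    Real.mul_self_sqrt (Finset.sum_nonneg fun j _ => sq_nonneg (s j))] at h
  exact h

lemma neg_two_mul_sqrt_mul_sqrt_le_sum_exp_sub_one_mul_add (x s : G → ℝ)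
    (hs : ∀ j, 0 ≤ s j) (k : G) :
    -(2 * (√(∑ j, x j ^ 2) * √(∑ j, s j ^ 2))) ≤ ∑ j, (exp (2 * x j) - 1) * s (j + k) := by
  calc -(2 * (√(∑ j, x j ^ 2) * √(∑ j, s j ^ 2))) ≤ 2 * ∑ j, x j * s (j + k) := by
        linarith [neg_sqrt_mul_sqrt_le_sum_mul_add x s k]
    _ = ∑ j, 2 * x j * s (j + k) := by rw [mul_sum]; simp only [mul_assoc]
    _ ≤ ∑ j, (exp (2 * x j) - 1) * s (j + k) := sum_le_sum fun j _ =>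
        mul_le_mul_of_nonneg_right (two_mul_le_exp_two_mul_sub_one (x j)) (hs _)

end ShiftedSums

lemma sum_exp_two_mul_sub_one_nonneg {ι : Type*} [Fintype ι] (x : ι → ℝ) (hx : ∑ j, x j = 0) :
    0 ≤ ∑ j, (exp (2 * x j) - 1) := by
  calc (0 : ℝ) = ∑ j, 2 * x j := by rw [← mul_sum, hx, mul_zero]
    _ ≤ ∑ j, (exp (2 * x j) - 1) := sum_le_sum fun j _ => two_mul_le_exp_two_mul_sub_one (x j)

lemma sum_sq_sum_mul_add_eq (a s : Fin 3 → ℝ) :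
    ∑ k, (∑ j, a j * s (j + k)) ^ 2 =
      (∑ j, a j ^ 2) * (∑ j, s j ^ 2 - ∑ j, s j * s (j + 1)) +
        (∑ j, a j) ^ 2 * ∑ j, s j * s (j + 1) := by
  simp only [Fin.sum_univ_three, Fin.reduceAdd, zero_add, add_zero]
  ring

lemma three_le_add_of_one_le_mul {p q r : ℝ} (hp : 0 ≤ p) (hq : 0 ≤ q) (hr : 0 ≤ r)
    (hpqr : 1 ≤ p * q * r) : 3 ≤ p + q + r := by
  have hamgm : 27 * (p * q * r) ≤ (p + q + r) ^ 3 := by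
    nlinarith [sq_nonneg (p - q), sq_nonneg (q - r), sq_nonneg (r - p), mul_nonneg hp hq,
      mul_nonneg hq hr, mul_nonneg hr hp]
  nlinarith [sq_nonneg (p + q + r - 3), sq_nonneg (p + q + r)]

lemma three_le_sum_mul_add_one (s : Fin 3 → ℝ) (hs : ∀ j, 0 ≤ s j) (hprod : 1 ≤ ∏ j, s j) :
    3 ≤ ∑ j, s j * s (j + 1) := by
  simp only [Fin.sum_univ_three, Fin.prod_univ_three, Fin.reduceAdd, zero_add] at hprod ⊢
  have h0 := hs 0; have h1 := hs 1; have h2 := hs 2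
  exact three_le_add_of_one_le_mul (mul_nonneg h0 h1) (mul_nonneg h1 h2) (mul_nonneg h2 h0)
    (by nlinarith [mul_nonneg (mul_nonneg h0 h1) h2])

lemma sum_sq_sum_mul_add_le (x s : Fin 3 → ℝ) (hx : ∑ j, x j = 0) (hs : ∀ j, 0 ≤ s j)
    (hprod : 1 ≤ ∏ j, s j) (hsmall : (∑ j, x j ^ 2) * ∑ j, s j ^ 2 ≤ 1 / 8) :
    ∑ k, (∑ j, (exp (2 * x j) - 1) * s (j + k)) ^ 2 ≤ 5 * (∑ j, x j ^ 2) * ∑ j, s j ^ 2 := by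
  set W := ∑ j, x j ^ 2 with hW
  set B := ∑ j, s j ^ 2
  set R := √W
  have hW0 : 0 ≤ W := sum_nonneg fun j _ => sq_nonneg (x j)
  have hRW : R ^ 2 = W := sq_sqrt hW0
  have hC : 3 ≤ ∑ j, s j * s (j + 1) := three_le_sum_mul_add_one s hs hprod
  have hCB : ∑ j, s j * s (j + 1) ≤ B := sum_mul_add_le_sum_sq s 1
  have hR : R ≤ 1 / 2 := by
    rw [sqrt_le_left (by norm_num)]; nlinarith
  have hxR : ∀ j, |x j| ≤ R := fun j =>
    abs_le_sqrt (single_le_sum (fun i _ => sq_nonneg (x i)) (mem_univ j))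
  have hsq_sum_le : ∑ j, (exp (2 * x j) - 1) ^ 2 ≤ 4 * (1 + 2 * R) ^ 2 * W := by
    rw [hW, mul_sum]
    exact sum_le_sum fun j _ => sq_exp_two_mul_sub_one_le (hxR j) hR
  have hsum_nonneg : 0 ≤ ∑ j, (exp (2 * x j) - 1) := sum_exp_two_mul_sub_one_nonneg x hx
  have hsum_le : ∑ j, (exp (2 * x j) - 1) ≤ 4 * W := by
    calc ∑ j, (exp (2 * x j) - 1) ≤ ∑ j, (2 * x j + 4 * x j ^ 2) := sum_le_sum fun j _ =>
          exp_two_mul_sub_one_le ((hxR j).trans hR)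
      _ = 4 * W := by rw [sum_add_distrib, ← mul_sum, ← mul_sum, hx]; ring
  rw [sum_sq_sum_mul_add_eq]
  calc _ ≤ 4 * (1 + 2 * R) ^ 2 * W * (B - 3) + (4 * W) ^ 2 * B := by
        gcongr
    _ ≤ 5 * W * B := by
        rw [← hRW] at hsmall ⊢
        have hB : 3 ≤ B := hC.trans hCB
        -- `16 R B ≤ 64 R² B + B` by AM-GM
        nlinarith [mul_nonneg (sq_nonneg (8 * R - 1)) (by linarith : (0 : ℝ) ≤ B),
          sqrt_nonneg W, mul_nonneg (sq_nonneg R) (by linarith : (0 : ℝ) ≤ B - 3)]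

theorem sum_exp_neg_pi_mul_sum_mul_add_le (x s : Fin 3 → ℝ) (hx : ∑ j, x j = 0)
    (hs : ∀ j, 0 ≤ s j) (hprod : 1 ≤ ∏ j, s j) :
    ∑ k, (exp (-π * ∑ j, (exp (2 * x j) - 1) * s (j + k)) - 1) ≤
      2 * π ^ 2 * (∑ j, x j ^ 2) * (∑ j, s j ^ 2) *
        (2 + exp (2 * π * √(∑ j, x j ^ 2) * √(∑ j, s j ^ 2))) := by
  set W := ∑ j, x j ^ 2
  set B := ∑ j, s j ^ 2
  set D := fun k => ∑ j, (exp (2 * x j) - 1) * s (j + k) with hD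
  set v := π * (√W * √B) with hv
  have hv0 : 0 ≤ v := by positivity
  have hv2 : v ^ 2 = π ^ 2 * W * B := by
    rw [hv, mul_pow, mul_pow, sq_sqrt (sum_nonneg fun j _ => sq_nonneg (x j)),
      sq_sqrt (sum_nonneg fun j _ => sq_nonneg (s j))]; ring
  have hT : ∀ k ∈ univ, -π * D k ≤ 2 * v := fun k _ => by
    nlinarith [neg_two_mul_sqrt_mul_sqrt_le_sum_exp_sub_one_mul_add x s hs k, pi_pos]
  have hsum : ∑ k, -π * D k ≤ 0 := by
    rw [← mul_sum, hD, sum_sum_mul_add]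
    have := mul_nonneg (sum_exp_two_mul_sub_one_nonneg x hx)
      (sum_nonneg fun j (_ : j ∈ univ) => hs j)
    nlinarith [pi_pos]
  rw [show 2 * π * √W * √B = 2 * v by rw [hv]; ring,
    show 2 * π ^ 2 * W * B = 2 * v ^ 2 by rw [hv2]; ring]
  rcases le_total v 1 with hsmall | hlarge
  · have hWB : W * B ≤ 1 / 8 := by nlinarith [pi_gt_three]
    have hexp : exp (2 * v) ≤ 8 :=
      (exp_le_exp.2 (by linarith)).trans exp_two_le_eight
    calc ∑ k, (exp (-π * D k) - 1) ≤ exp (2 * v) / 2 * ∑ k, (-π * D k) ^ 2 :=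
          sum_exp_sub_one_le_mul_sum_sq (by positivity) hT hsum
      _ = exp (2 * v) / 2 * π ^ 2 * ∑ k, D k ^ 2 := by
          simp only [mul_pow, neg_sq, ← mul_sum]; ring
      _ ≤ exp (2 * v) / 2 * π ^ 2 * (5 * W * B) := by
          gcongr; exact sum_sq_sum_mul_add_le x s hx hs hprod hWB
      _ = 2 * v ^ 2 * (2 + exp (2 * v)) - v ^ 2 * (8 - exp (2 * v)) / 2 := by rw [hv2]; ring
      _ ≤ _ := by nlinarith [mul_nonneg (sq_nonneg v) (sub_nonneg.2 hexp)]
  · calc ∑ k, (exp (-π * D k) - 1) ≤ (#(univ : Finset (Fin 3)) - 1) * (exp (2 * v) - 1) :=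
          sum_exp_sub_one_le_card_sub_one_mul univ_nonempty hT hsum
      _ ≤ _ := by
          simp only [card_univ, Fintype.card_fin, Nat.cast_ofNat]
          nlinarith [exp_pos (2 * v), one_le_pow₀ (n := 2) hlarge]

lemma mul_exp_neg_pi_mul_le {N B r : ℝ} (hN : 9 ≤ N) (hBN : B ≤ N ^ 2)
    (hr : 0 ≤ r) :
    4 * π ^ 2 * B * exp (-π * N) * (1 + 1 / 2 * exp (2 * π * r * √B)) ≤
      4 * π ^ 2 * (exp (-(π - 1 / 2) * N) +
        1 / 2 * exp (-(π * (1 - 2 * r - 1 / (2 * π))) * N)) := by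
  have hmain : B * exp (-π * N) ≤ exp (-(π - 1 / 2) * N) :=
    calc B * exp (-π * N) ≤ exp (N / 2) * exp (-π * N) := by
          gcongr; exact hBN.trans (sq_le_exp_div_two hN)
      _ = exp (-(π - 1 / 2) * N) := by rw [← exp_add]; ring_nf
  have hsqrt : √B ≤ N := (sqrt_le_left (by linarith)).2 hBN
  have htail : B * exp (-π * N) * exp (2 * π * r * √B) ≤
      exp (-(π * (1 - 2 * r - 1 / (2 * π))) * N) :=
    calc B * exp (-π * N) * exp (2 * π * r * √B)
        ≤ exp (-(π - 1 / 2) * N) * exp (2 * π * r * N) := by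
          gcongr
      _ = exp (-(π * (1 - 2 * r - 1 / (2 * π))) * N) := by
          rw [← exp_add]; congr 1; field_simp; ring
  calc _ = 4 * π ^ 2 * (B * exp (-π * N) + 1 / 2 * (B * exp (-π * N) * exp (2 * π * r * √B))) := by
        ring
    _ ≤ _ := by gcongr

lemma AlgEquiv.apply_apply_apply_of_orderOf_eq_three {R A : Type*} [CommSemiring R] [Semiring A]
    [Algebra R A] {σ : A ≃ₐ[R] A} (hσ : orderOf σ = 3) (g : A) : σ (σ (σ g)) = g := by
  have h : (σ ^ 3) g = g := by rw [← hσ, pow_orderOf_eq_one]; rfl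
  simpa [pow_succ] using h

lemma orderOf_eq_finrank_of_forall_mem_zpowers {K L : Type*} [Field K] [Field L] [Algebra K L]
    [FiniteDimensional K L] [IsGalois K L] {σ : L ≃ₐ[K] L}
    (hσ : ∀ τ, τ ∈ Subgroup.zpowers σ) : orderOf σ = Module.finrank K L := by
  rw [orderOf_eq_card_of_forall_mem_zpowers hσ, IsGalois.card_aut_eq_finrank]

lemma algebraMap_norm_eq_mul_mul {K L : Type*} [Field K] [Field L] [Algebra K L]
    [FiniteDimensional K L] [IsGalois K L] {σ : L ≃ₐ[K] L} (hσ : ∀ τ, τ ∈ Subgroup.zpowers σ)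
    (h3 : orderOf σ = 3) (f : L) :
    algebraMap K L (Algebra.norm K f) = f * σ f * σ (σ f) := by
  classical
  have huniv : (univ : Finset (L ≃ₐ[K] L)) = (range 3).image (σ ^ ·) := by
    ext τ; simp only [mem_univ, ← h3, ← mem_zpowers_iff_mem_range_orderOf, hσ]
  rw [Algebra.norm_eq_prod_automorphisms, huniv, prod_image]
  · simp [prod_range_succ, mul_assoc]
  · intro i hi j hj hij
    exact pow_injOn_Iio_orderOf (by simpa [h3] using hi) (by simpa [h3] using hj) hij

noncomputable def galoisCoords {F : Type*} [Field F] [Algebra ℚ F] (σ : F ≃ₐ[ℚ] F)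
    (ι : F →+* ℝ) (f : F) : Fin 3 → ℝ :=
  ![ι f, ι (σ f), ι (σ (σ f))]

section GaloisCoords

variable {F : Type*} [Field F] [Algebra ℚ F] (σ : F ≃ₐ[ℚ] F) (ι : F →+* ℝ)

lemma fnorm2_nonneg (f : F) : 0 ≤ fnorm2 σ ι f := by
  unfold fnorm2; positivity

lemma fnorm2_sq_eq_sum (f : F) : fnorm2 σ ι (f ^ 2) = ∑ j, (galoisCoords σ ι f j ^ 2) ^ 2 := by
  simp [fnorm2, galoisCoords, Fin.sum_univ_three]

lemma fnorm2_sq_le_sq (f : F) : fnorm2 σ ι (f ^ 2) ≤ fnorm2 σ ι f ^ 2 := by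
  simp only [fnorm2, map_pow]
  nlinarith [mul_nonneg (sq_nonneg (ι f)) (sq_nonneg (ι (σ f))),
    mul_nonneg (sq_nonneg (ι (σ f))) (sq_nonneg (ι (σ (σ f)))),
    mul_nonneg (sq_nonneg (ι f)) (sq_nonneg (ι (σ (σ f))))]

lemma G2_eq_sum (hσ : ∀ g, σ (σ (σ g)) = g) (x y z : ℝ) (f : F) :
    G2 σ ι ![exp x, exp y, exp z] f =
      ∑ k, (exp (-π * ∑ j, (exp (2 * ![x, y, z] j) - 1) * galoisCoords σ ι f (j + k) ^ 2)
        - 1) := by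
  simp [G2, G1, unorm2, fnorm2, galoisCoords, Fin.sum_univ_three, hσ, ← exp_nat_mul]
  ring_nf

end GaloisCoords

lemma one_le_prod_galoisCoords_sq {F : Type*} [Field F] [NumberField F] [IsGalois ℚ F]
    {σ : F ≃ₐ[ℚ] F} (hσ : ∀ τ, τ ∈ Subgroup.zpowers σ) (h3 : orderOf σ = 3) (ι : F →+* ℝ)
    {f : 𝓞 F} (hf : f ≠ 0) : 1 ≤ ∏ j, galoisCoords σ ι f j ^ 2 := by
  have hnorm : ∏ j, galoisCoords σ ι f j = (Algebra.norm ℤ f : ℤ) := by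
    have h := congrArg ι (algebraMap_norm_eq_mul_mul hσ h3 (f : F))
    rw [← Algebra.coe_norm_int] at h
    simpa [galoisCoords, Fin.prod_univ_three, mul_assoc] using h.symm
  have hne : Algebra.norm ℤ f ≠ 0 := Algebra.norm_ne_zero_iff.2 hf
  rw [prod_pow, hnorm, one_le_sq_iff_one_le_abs, ← Int.cast_abs]
  exact_mod_cast Int.one_le_abs hne

lemma G2_le {F : Type*} [Field F] [NumberField F] [IsGalois ℚ F] {σ : F ≃ₐ[ℚ] F}
    (hσ : ∀ τ, τ ∈ Subgroup.zpowers σ) (h3 : orderOf σ = 3) (ι : F →+* ℝ) {x y z : ℝ}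
    (hxyz : x + y + z = 0) (f : 𝓞 F) :
    G2 σ ι ![exp x, exp y, exp z] f ≤
      2 * π ^ 2 * (x ^ 2 + y ^ 2 + z ^ 2) * fnorm2 σ ι ((f : F) ^ 2) *
        (2 + exp (2 * π * √(x ^ 2 + y ^ 2 + z ^ 2) * √(fnorm2 σ ι ((f : F) ^ 2)))) := by
  by_cases hf : f = 0
  · simp [hf, G2, G1, unorm2, fnorm2]
  have hW : x ^ 2 + y ^ 2 + z ^ 2 = ∑ j, ![x, y, z] j ^ 2 := by simp [Fin.sum_univ_three]
  rw [G2_eq_sum σ ι (AlgEquiv.apply_apply_apply_of_orderOf_eq_three h3), fnorm2_sq_eq_sum, hW]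
  exact sum_exp_neg_pi_mul_sum_mul_add_le ![x, y, z] (fun j => galoisCoords σ ι f j ^ 2)
    (by simp [Fin.sum_univ_three, hxyz]) (fun j => sq_nonneg _)
    (one_le_prod_galoisCoords_sq hσ h3 ι hf)

lemma Gfun_le {F : Type*} [Field F] [NumberField F] [IsGalois ℚ F] {σ : F ≃ₐ[ℚ] F}
    (hσ : ∀ τ, τ ∈ Subgroup.zpowers σ) (h3 : orderOf σ = 3) (ι : F →+* ℝ) {x y z : ℝ}
    (hxyz : x + y + z = 0) (f : 𝓞 F) :
    Gfun σ ι x y z (f : F) ≤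
      4 * π ^ 2 * fnorm2 σ ι ((f : F) ^ 2) * exp (-π * fnorm2 σ ι (f : F)) *
        (1 + 1 / 2 * exp (2 * π * √(x ^ 2 + y ^ 2 + z ^ 2) * √(fnorm2 σ ι ((f : F) ^ 2)))) := by
  have := fnorm2_nonneg σ ι ((f : F) ^ 2)
  refine div_le_of_le_mul₀ (by positivity) (by positivity) ?_
  calc _ ≤ exp (-π * fnorm2 σ ι (f : F)) * (2 * π ^ 2 * (x ^ 2 + y ^ 2 + z ^ 2) *
        fnorm2 σ ι ((f : F) ^ 2) * (2 + exp (2 * π * √(x ^ 2 + y ^ 2 + z ^ 2) *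
          √(fnorm2 σ ι ((f : F) ^ 2))))) := by gcongr; exact G2_le hσ h3 ι hxyz f
    _ = _ := by ring

theorem Gfun_taylor_bound_general
    {F : Type*} [Field F] [NumberField F] [IsGalois ℚ F]
    (h3 : Module.finrank ℚ F = 3)
    (σ : F ≃ₐ[ℚ] F) (hσ : ∀ τ : F ≃ₐ[ℚ] F, τ ∈ Subgroup.zpowers σ)
    (ι : F →+* ℝ)
    (x y z : ℝ) (hxyz : x + y + z = 0)
    (f : 𝓞 F) :
    Gfun σ ι x y z (f : F) ≤
      4 * Real.pi ^ 2 * fnorm2 σ ι ((f : F) ^ 2) * Real.exp (-Real.pi * fnorm2 σ ι (f : F)) *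
        (1 + (1/2) * Real.exp (2 * Real.pi * Real.sqrt (x ^ 2 + y ^ 2 + z ^ 2) *
          Real.sqrt (fnorm2 σ ι ((f : F) ^ 2)))) ∧
    (9 ≤ fnorm2 σ ι (f : F) →
      Gfun σ ι x y z (f : F) ≤
        4 * Real.pi ^ 2 *
          (Real.exp (-(Real.pi - 1/2) * fnorm2 σ ι (f : F)) +
            (1/2) * Real.exp (-(Real.pi * (1 - 2 * Real.sqrt (x ^ 2 + y ^ 2 + z ^ 2) -
              1 / (2 * Real.pi))) * fnorm2 σ ι (f : F)))) := by
  have hfirst := Gfun_le hσ ((orderOf_eq_finrank_of_forall_mem_zpowers hσ).trans h3) ι hxyz f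
  exact ⟨hfirst, fun hN => hfirst.trans
    (mul_exp_neg_pi_mul_le hN (fnorm2_sq_le_sq σ ι f) (sqrt_nonneg _))⟩

/-- Taylor-expansion upper bounds for `G(u,f)`, where `u = (e^x, e^y, e^z)`,
`x + y + z = 0` and `w = (−x,−y,−z) ≠ 0`.  Here `‖f²‖² = f₀⁴ + f₁⁴ + f₂⁴ = fnorm2 (f²)`. -/
theorem Gfun_taylor_bound
    {F : Type*} [Field F] [NumberField F] [IsGalois ℚ F]
    (h3 : Module.finrank ℚ F = 3)
    (σ : F ≃ₐ[ℚ] F) (hσ : ∀ τ : F ≃ₐ[ℚ] F, τ ∈ Subgroup.zpowers σ)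
    (ι : F →+* ℝ)
    (x y z : ℝ) (hxyz : x + y + z = 0) (hw : 0 < x ^ 2 + y ^ 2 + z ^ 2)
    (f : 𝓞 F) :
    Gfun σ ι x y z (f : F) ≤
      4 * Real.pi ^ 2 * fnorm2 σ ι ((f : F) ^ 2) * Real.exp (-Real.pi * fnorm2 σ ι (f : F)) *
        (1 + (1/2) * Real.exp (2 * Real.pi * Real.sqrt (x ^ 2 + y ^ 2 + z ^ 2) *
          Real.sqrt (fnorm2 σ ι ((f : F) ^ 2)))) ∧
    (9 ≤ fnorm2 σ ι (f : F) →
      Gfun σ ι x y z (f : F) ≤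
        4 * Real.pi ^ 2 *
          (Real.exp (-(Real.pi - 1/2) * fnorm2 σ ι (f : F)) +
            (1/2) * Real.exp (-(Real.pi * (1 - 2 * Real.sqrt (x ^ 2 + y ^ 2 + z ^ 2) -
              1 / (2 * Real.pi))) * fnorm2 σ ι (f : F)))) :=
  Gfun_taylor_bound_general h3 σ hσ ι x y z hxyz f
end

section
/- Let F be a cyclic cubic field and let u = (e^x, e^y, e^z) with x + y + z = 0 and 0 < ‖w‖² = x² + y² + z² < 0.170856². Then T₁(u) = G(u,1) + G(u,−1) = 2G(u,1) ≤ −0.002652393, where explicitly G(u,1) = 3 e^{−3π}( e^{−π(e^{2x} + e^{2y} + e^{2z} − 3)} − 1 )/‖w‖². -/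
/-!
As `σ` fixes `±1`, `T₁(u) = 6 e^{-3π} (e^{-π(S-3)} - 1) / r` with `S = e^{2x} + e^{2y} + e^{2z}`
and `r = x² + y² + z²`. Since `e^s ≥ 1 + s + s²/2 + s³/6` and `x + y + z = 0`, we get
`S - 3 ≥ 2r + 4xyz`, and `54 (xyz)² ≤ r³` makes the cubic term `O(r^{3/2})`, so `S - 3 ≥ 1.906 r`
for `r < 0.170856²`. The alternating Taylor bound for `e^{-t}` then gives
`1 - e^{-π(S-3)} ≥ 5.49 r`, and `e^{3π} ≤ 12396` finishes, as `6 · 5.49 / 12396 > 0.002652393`.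
-/

open NumberField
open scoped nonZeroDivisors

open Real

lemma abs_exp_sub_quartic_le {t : ℝ} (ht : |t| ≤ 1) :
    |exp t - (1 + t + t ^ 2 / 2 + t ^ 3 / 6 + t ^ 4 / 24)| ≤ |t| ^ 5 / 100 := by
  have h := Real.exp_bound ht (n := 5) (by norm_num)
  norm_num [Finset.sum_range_succ, Nat.factorial] at h
  convert h using 1
  ring

lemma cubic_le_exp {t : ℝ} (ht : |t| ≤ 1) : 1 + t + t ^ 2 / 2 + t ^ 3 / 6 ≤ exp t := by
  have h := (abs_le.mp (abs_exp_sub_quartic_le ht)).1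
  have h5 : |t| ^ 5 ≤ t ^ 4 := by
    calc |t| ^ 5 = |t| * t ^ 4 := by rw [pow_succ', Even.pow_abs ⟨2, rfl⟩]
      _ ≤ 1 * t ^ 4 := by gcongr
      _ = t ^ 4 := one_mul _
  nlinarith [sq_nonneg (t ^ 2)]

lemma exp_neg_le_quartic {t : ℝ} (h0 : 0 ≤ t) (h1 : t ≤ 1) :
    exp (-t) ≤ 1 - t + t ^ 2 / 2 - t ^ 3 / 6 + t ^ 4 / 12 := by
  have ht : |-t| ≤ 1 := by rwa [abs_neg, abs_of_nonneg h0]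
  have h := (abs_le.mp (abs_exp_sub_quartic_le ht)).2
  rw [abs_neg, abs_of_nonneg h0] at h
  have h5 : t ^ 5 ≤ t ^ 4 := pow_le_pow_of_le_one h0 h1 (by norm_num)
  nlinarith

-- `e^{3π} ≈ 12391.6`; splitting it as a 64th power brings the quartic bound within that margin.
lemma exp_three_mul_pi_le : exp (3 * π) ≤ 12396 := by
  set a : ℝ := 9.424779 / 64
  have ha : |a| ≤ 1 := by rw [abs_of_nonneg] <;> norm_num [a]
  have hexp_a := (abs_le.mp (abs_exp_sub_quartic_le ha)).2
  rw [abs_of_nonneg (by norm_num [a])] at hexp_a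
  calc exp (3 * π) ≤ exp (64 * a) := exp_le_exp.mpr (by norm_num [a]; linarith [pi_lt_d6])
    _ = exp a ^ 64 := by rw [← exp_nat_mul]; norm_num
    _ ≤ (1 + a + a ^ 2 / 2 + a ^ 3 / 6 + a ^ 4 / 24 + a ^ 5 / 100) ^ 64 := by
        gcongr; linarith
    _ ≤ 12396 := by norm_num [a]

section ZeroSum

variable {x y z : ℝ}

lemma sq_mul_mul_le_of_add_eq_zero (h : x + y + z = 0) :
    54 * (x * y * z) ^ 2 ≤ (x ^ 2 + y ^ 2 + z ^ 2) ^ 3 := by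
  obtain rfl : z = -x - y := by linarith
  nlinarith [sq_nonneg ((x - y) * (x + 2 * y) * (2 * x + y))]

lemma cube_add_cube_add_cube_of_add_eq_zero (h : x + y + z = 0) :
    x ^ 3 + y ^ 3 + z ^ 3 = 3 * (x * y * z) := by
  obtain rfl : z = -x - y := by linarith
  ring

lemma three_add_mul_le_sum_exp_two_mul (h : x + y + z = 0)
    (hr : x ^ 2 + y ^ 2 + z ^ 2 ≤ 0.170856 ^ 2) :
    3 + 1.906 * (x ^ 2 + y ^ 2 + z ^ 2) ≤ exp (2 * x) + exp (2 * y) + exp (2 * z) := by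
  set r := x ^ 2 + y ^ 2 + z ^ 2
  have hr0 : 0 ≤ r := by positivity
  have two_mul_le {t : ℝ} (ht : t ^ 2 ≤ r) : |2 * t| ≤ 1 := by
    rw [abs_le]; constructor <;> nlinarith
  -- `54 (xyz)² ≤ r³` and `0.094 ≥ 4 · 0.170856 / √54`
  have hxyz : -(0.094 * r) ≤ 4 * (x * y * z) := by
    have h54 := sq_mul_mul_le_of_add_eq_zero h
    refine (abs_le_of_sq_le_sq' ?_ (by positivity)).1
    nlinarith [mul_le_mul_of_nonneg_left hr (sq_nonneg r)]
  have hx := cubic_le_exp (two_mul_le (t := x) (by nlinarith [sq_nonneg y, sq_nonneg z]))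
  have hy := cubic_le_exp (two_mul_le (t := y) (by nlinarith [sq_nonneg x, sq_nonneg z]))
  have hz := cubic_le_exp (two_mul_le (t := z) (by nlinarith [sq_nonneg x, sq_nonneg y]))
  nlinarith [cube_add_cube_add_cube_of_add_eq_zero h]

end ZeroSum

lemma mul_le_one_sub_exp_neg_pi_mul {r : ℝ} (hr0 : 0 ≤ r) (hr1 : r ≤ 0.170856 ^ 2) :
    5.49 * r ≤ 1 - exp (-π * (1.906 * r)) := by
  rw [neg_mul]
  set t := π * (1.906 * r)
  have ht0 : 0 ≤ t := by positivity
  have ht_lo : 3.141592 * (1.906 * r) ≤ t :=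
    mul_le_mul_of_nonneg_right pi_gt_d6.le (by positivity)
  have ht_hi : t ≤ 3.141593 * (1.906 * r) :=
    mul_le_mul_of_nonneg_right pi_lt_d6.le (by positivity)
  have ht1 : t ≤ 0.1748 := by nlinarith
  have hexp := exp_neg_le_quartic ht0 (by linarith)
  have hpoly : 0.917 * t ≤ t - t ^ 2 / 2 + t ^ 3 / 6 - t ^ 4 / 12 := by
    have hs : 0 ≤ 0.1748 - t := by linarith
    nlinarith [mul_nonneg ht0 hs, mul_nonneg (mul_nonneg ht0 ht0) hs,
      mul_nonneg (mul_nonneg ht0 ht0) (mul_nonneg ht0 hs)]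
  linarith

section Gfun

variable {F : Type*} [Field F] [Algebra ℚ F] (σ : F ≃ₐ[ℚ] F) (ι : F →+* ℝ) (x y z : ℝ)

lemma Gfun_neg (f : F) : Gfun σ ι x y z (-f) = Gfun σ ι x y z f := by
  simp only [Gfun, G2, G1, unorm2, fnorm2, map_neg, neg_sq]

lemma Gfun_one : Gfun σ ι x y z 1 =
    3 * exp (-3 * π) * (exp (-π * (exp (2 * x) + exp (2 * y) + exp (2 * z) - 3)) - 1) /
      (x ^ 2 + y ^ 2 + z ^ 2) := by
  simp only [Gfun, G2, G1, unorm2, fnorm2, map_one, one_pow, mul_one, Matrix.cons_val_zero,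
    Matrix.cons_val_one, Matrix.cons_val_two, Matrix.head_cons, Matrix.tail_cons,
    ← exp_nat_mul, Nat.cast_ofNat]
  ring_nf

end Gfun

theorem T1_bound_general
    {F : Type*} [Field F] [NumberField F]
    (σ : F ≃ₐ[ℚ] F)
    (ι : F →+* ℝ)
    (x y z : ℝ) (hxyz : x + y + z = 0)
    (hw0 : 0 < x ^ 2 + y ^ 2 + z ^ 2) (hw1 : x ^ 2 + y ^ 2 + z ^ 2 < 0.170856 ^ 2) :
    Gfun σ ι x y z 1 + Gfun σ ι x y z (-1) ≤ -0.002652393 := by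
  rw [Gfun_neg, ← two_mul, Gfun_one]
  set r := x ^ 2 + y ^ 2 + z ^ 2
  set S := exp (2 * x) + exp (2 * y) + exp (2 * z)
  have hS : 1.906 * r ≤ S - 3 := by linarith [three_add_mul_le_sum_exp_two_mul hxyz hw1.le]
  have hE : 5.49 * r ≤ 1 - exp (-π * (S - 3)) :=
    (mul_le_one_sub_exp_neg_pi_mul hw0.le hw1.le).trans
      (by rw [neg_mul, neg_mul]; gcongr)
  have hπ : 1 / 12396 ≤ exp (-3 * π) := by
    rw [neg_mul, exp_neg, one_div]
    exact inv_anti₀ (exp_pos _) exp_three_mul_pi_le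
  rw [mul_div_assoc', div_le_iff₀ hw0]
  nlinarith [mul_le_mul hπ hE (by positivity) (exp_pos _).le]

/-- The bound `T₁(u) = G(u,1) + G(u,−1) ≤ −0.002652393` for `u = (e^x,e^y,e^z)` with
`x + y + z = 0` and `0 < ‖w‖² < 0.170856²`. -/
theorem T1_bound
    {F : Type*} [Field F] [NumberField F] [IsGalois ℚ F]
    (h3 : Module.finrank ℚ F = 3)
    (σ : F ≃ₐ[ℚ] F) (hσ : ∀ τ : F ≃ₐ[ℚ] F, τ ∈ Subgroup.zpowers σ)
    (ι : F →+* ℝ)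
    (x y z : ℝ) (hxyz : x + y + z = 0)
    (hw0 : 0 < x ^ 2 + y ^ 2 + z ^ 2) (hw1 : x ^ 2 + y ^ 2 + z ^ 2 < 0.170856 ^ 2) :
    Gfun σ ι x y z 1 + Gfun σ ι x y z (-1) ≤ -0.002652393 :=
  T1_bound_general σ ι x y z hxyz hw0 hw1
end
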